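/- arXiv:2010.09796 — 8 statements merged into one kernel-verified Lean document; each statement's English description precedes it below -/
import Mathlib

section
/- Let v ≥ 1 and 0 ≤ t < b ≤ v be integers, and let μ_0, μ_1, …, μ_t be integers. There exists an integral (v, μ_0, …, μ_t)-design of block size b if and only if (v − s)·μ_{s+1} = (b − s)·μ_s for all 0 ≤ s < t. -/
open Finset

variable {α : Type*} [DecidableEq α]

namespace GJ

/-- Sum of `c` over all `b`-element subsets of `V` containing `Y`. -/
def incSum (V : Finset α) (b : ℕ) (c : Finset α → ℤ) (Y : Finset α) : ℤ :=
  ∑ X ∈ (V.powersetCard b).filter (fun X => Y ⊆ X), c X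

/-- The "down" operator: sum over one-point extensions inside `V`. -/
def dSum (V : Finset α) (h : Finset α → ℤ) (Y : Finset α) : ℤ :=
  ∑ y ∈ V \ Y, h (insert y Y)

lemma incSum_add (V : Finset α) (b : ℕ) (f g : Finset α → ℤ) (Y : Finset α) :
    incSum V b (fun X => f X + g X) Y = incSum V b f Y + incSum V b g Y := by
  simp [incSum, Finset.sum_add_distrib]

lemma incSum_mul (V : Finset α) (b : ℕ) (z : ℤ) (f : Finset α → ℤ) (Y : Finset α) :
    incSum V b (fun X => z * f X) Y = z * incSum V b f Y := by
  simp [incSum, Finset.mul_sum]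

lemma incSum_list {γ : Type*} (V : Finset α) (b : ℕ) (L : List γ) (f : γ → Finset α → ℤ)
    (Y : Finset α) :
    incSum V b (fun X => (L.map (fun q => f q X)).sum) Y
      = (L.map (fun q => incSum V b (f q) Y)).sum := by
  induction L with
  | nil => simp [incSum]
  | cons a L ih =>
      simp only [List.map_cons, List.sum_cons]
      rw [incSum_add, ih]

lemma dSum_sub (V : Finset α) (f g : Finset α → ℤ) (Y : Finset α) :
    dSum V (fun Z => f Z - g Z) Y = dSum V f Y - dSum V g Y := by
  simp [dSum, Finset.sum_sub_distrib]

lemma dSum_mul (V : Finset α) (z : ℤ) (f : Finset α → ℤ) (Y : Finset α) :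
    dSum V (fun Z => z * f Z) Y = z * dSum V f Y := by
  simp [dSum, Finset.mul_sum]

lemma dSum_add (V : Finset α) (f g : Finset α → ℤ) (Y : Finset α) :
    dSum V (fun Z => f Z + g Z) Y = dSum V f Y + dSum V g Y := by
  simp [dSum, Finset.sum_add_distrib]

lemma dSum_list {γ : Type*} (V : Finset α) (L : List γ) (f : γ → Finset α → ℤ)
    (Y : Finset α) :
    dSum V (fun Z => (L.map (fun q => f q Z)).sum) Y
      = (L.map (fun q => dSum V (f q) Y)).sum := by
  induction L with
  | nil => simp [dSum]
  | cons a L ih =>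
      simp only [List.map_cons, List.sum_cons]
      rw [dSum_add, ih]

/-- Counting supersets. -/
lemma card_superset (V Y : Finset α) (b : ℕ) (hY : Y ⊆ V) (hb : Y.card ≤ b) :
    ((V.powersetCard b).filter (fun X => Y ⊆ X)).card
      = (V.card - Y.card).choose (b - Y.card) := by
  rw [← Finset.card_sdiff_of_subset hY, ← Finset.card_powersetCard]
  apply Finset.card_bij' (fun X _ => X \ Y) (fun X' _ => X' ∪ Y)
  · intro X hX
    simp only [Finset.mem_filter, Finset.mem_powersetCard] at hX
    obtain ⟨⟨hXV, hXb⟩, hYX⟩ := hX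
    simp only [Finset.mem_powersetCard]
    constructor
    · exact Finset.sdiff_subset_sdiff hXV (le_refl Y)
    · rw [Finset.card_sdiff_of_subset hYX, hXb]
  · intro X' hX'
    simp only [Finset.mem_powersetCard] at hX'
    obtain ⟨hX'V, hX'c⟩ := hX'
    simp only [Finset.mem_filter, Finset.mem_powersetCard]
    have hdisj : Disjoint X' Y := Finset.disjoint_of_subset_left hX'V (Finset.sdiff_disjoint)
    refine ⟨⟨?_, ?_⟩, Finset.subset_union_right⟩
    · exact Finset.union_subset (hX'V.trans Finset.sdiff_subset) hY
    · rw [Finset.card_union_of_disjoint hdisj, hX'c]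
      omega
  · intro X hX
    simp only [Finset.mem_filter, Finset.mem_powersetCard] at hX
    exact Finset.sdiff_union_of_subset hX.2
  · intro X' hX'
    simp only [Finset.mem_powersetCard] at hX'
    have hdisj : Disjoint X' Y := Finset.disjoint_of_subset_left hX'.1 (Finset.sdiff_disjoint)
    rw [Finset.union_sdiff_right]
    exact Finset.sdiff_eq_self_iff_disjoint.mpr hdisj

/-- Double counting: down-sum of inclusion sums. -/
lemma dSum_incSum (V : Finset α) (b : ℕ) (c : Finset α → ℤ) (Y : Finset α) :
    dSum V (incSum V b c) Y = ((b : ℤ) - Y.card) * incSum V b c Y := by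
  unfold dSum incSum
  have step1 : ∀ y ∈ V \ Y,
      (∑ X ∈ (V.powersetCard b).filter (fun X => insert y Y ⊆ X), c X)
        = ∑ X ∈ (V.powersetCard b).filter (fun X => Y ⊆ X), (if y ∈ X then c X else 0) := by
    intro y hy
    rw [Finset.sum_filter, Finset.sum_filter]
    refine Finset.sum_congr rfl fun X hX => ?_
    by_cases h1 : Y ⊆ X <;> by_cases h2 : y ∈ X <;>
      simp [Finset.insert_subset_iff, h1, h2]
  rw [Finset.sum_congr rfl step1, Finset.sum_comm, Finset.mul_sum]
  refine Finset.sum_congr rfl fun X hX => ?_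
  simp only [Finset.mem_filter, Finset.mem_powersetCard] at hX
  obtain ⟨⟨hXV, hXb⟩, hYX⟩ := hX
  rw [← Finset.sum_filter]
  have hfe : (V \ Y).filter (fun y => y ∈ X) = X \ Y := by
    ext x
    simp only [Finset.mem_filter, Finset.mem_sdiff]
    constructor
    · rintro ⟨⟨_, hxY⟩, hxX⟩; exact ⟨hxX, hxY⟩
    · rintro ⟨hxX, hxY⟩; exact ⟨⟨hXV hxX, hxY⟩, hxX⟩
  rw [hfe, Finset.sum_const, Finset.card_sdiff_of_subset hYX, hXb]
  have : (Y.card : ℤ) ≤ b := by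
    exact_mod_cast hXb ▸ Finset.card_le_card hYX
  rw [nsmul_eq_mul]
  push_cast [Nat.cast_sub (hXb ▸ Finset.card_le_card hYX)]
  ring

/-- Lifting along a point. -/
lemma incSum_lift (V : Finset α) (b : ℕ) (m : Finset α → ℤ) (a : α) (ha : a ∈ V)
    (Y : Finset α) :
    incSum V (b + 1) (fun X => if a ∈ X then m (X.erase a) else 0) Y
      = incSum (V.erase a) b m (Y.erase a) := by
  unfold incSum
  rw [← Finset.sum_filter]
  refine Finset.sum_bij' (fun X _ => X.erase a) (fun X' _ => insert a X') ?_ ?_ ?_ ?_ ?_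
  · intro X hX
    simp only [Finset.mem_filter, Finset.mem_powersetCard] at hX
    obtain ⟨⟨⟨hXV, hXb⟩, hYX⟩, haX⟩ := hX
    simp only [Finset.mem_filter, Finset.mem_powersetCard]
    refine ⟨⟨?_, ?_⟩, ?_⟩
    · exact Finset.erase_subset_erase a hXV
    · rw [Finset.card_erase_of_mem haX, hXb]; rfl
    · exact Finset.erase_subset_erase a hYX
  · intro X' hX'
    simp only [Finset.mem_filter, Finset.mem_powersetCard] at hX'
    obtain ⟨⟨hX'V, hX'b⟩, hYX'⟩ := hX'
    have haX' : a ∉ X' := fun hmem => (Finset.mem_erase.mp (hX'V hmem)).1 rfl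
    simp only [Finset.mem_filter, Finset.mem_powersetCard]
    refine ⟨⟨⟨?_, ?_⟩, ?_⟩, Finset.mem_insert_self a X'⟩
    · exact Finset.insert_subset ha (hX'V.trans (Finset.erase_subset a V))
    · rw [Finset.card_insert_of_notMem haX', hX'b]
    · intro y hy
      by_cases hya : y = a
      · rw [hya]; exact Finset.mem_insert_self a X'
      · exact Finset.mem_insert_of_mem (hYX' (Finset.mem_erase.mpr ⟨hya, hy⟩))
  · intro X hX
    simp only [Finset.mem_filter] at hX
    exact Finset.insert_erase hX.2
  · intro X' hX'
    simp only [Finset.mem_filter, Finset.mem_powersetCard] at hX'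
    have haX' : a ∉ X' := fun hmem => (Finset.mem_erase.mp (hX'.1.1 hmem)).1 rfl
    exact Finset.erase_insert haX'
  · intro X hX
    rfl


/-- The pod vector at level `P.length`. -/
def podVec : List (α × α) → Finset α → ℤ
  | [], Y => if Y = ∅ then 1 else 0
  | p :: P, Y => (if p.1 ∈ Y then podVec P (Y.erase p.1) else 0)
      - (if p.2 ∈ Y then podVec P (Y.erase p.2) else 0)

/-- The pod block weighting with root `R`. -/
def podBlock : List (α × α) → Finset α → Finset α → ℤ
  | [], R, X => if X = R then 1 else 0
  | p :: P, R, X => (if p.1 ∈ X then podBlock P R (X.erase p.1) else 0)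
      - (if p.2 ∈ X then podBlock P R (X.erase p.2) else 0)

/-- Support of a list of pairs. -/
def psupp : List (α × α) → Finset α
  | [] => ∅
  | p :: P => insert p.1 (insert p.2 (psupp P))

/-- Validity of a pod inside `V`: all points distinct and in `V`. -/
def podOK (V : Finset α) : List (α × α) → Prop
  | [] => True
  | p :: P => p.1 ∈ V ∧ p.2 ∈ V ∧ p.1 ≠ p.2 ∧ p.1 ∉ psupp P ∧ p.2 ∉ psupp P ∧ podOK V P

lemma fst_mem_psupp (p : α × α) (P : List (α × α)) : p.1 ∈ psupp (p :: P) := by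
  simp [psupp]

lemma snd_mem_psupp (p : α × α) (P : List (α × α)) : p.2 ∈ psupp (p :: P) := by
  simp [psupp]

lemma psupp_subset_cons (p : α × α) (P : List (α × α)) : psupp P ⊆ psupp (p :: P) := by
  intro y hy; simp [psupp, hy]

lemma psupp_subset {V : Finset α} {P : List (α × α)} (h : podOK V P) : psupp P ⊆ V := by
  induction P with
  | nil => simp [psupp]
  | cons p P ih =>
      obtain ⟨h1, h2, _, _, _, hP⟩ := h
      simp only [psupp]
      exact Finset.insert_subset h1 (Finset.insert_subset h2 (ih hP))

lemma podOK_mono {V W : Finset α} {P : List (α × α)} (hVW : V ⊆ W) (h : podOK V P) :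
    podOK W P := by
  induction P with
  | nil => trivial
  | cons p P ih =>
      obtain ⟨h1, h2, h3, h4, h5, hP⟩ := h
      exact ⟨hVW h1, hVW h2, h3, h4, h5, ih hP⟩

lemma podOK_erase {V : Finset α} {P : List (α × α)} (h : podOK V P) {x : α}
    (hx : x ∉ psupp P) : podOK (V.erase x) P := by
  induction P with
  | nil => trivial
  | cons p P ih =>
      obtain ⟨h1, h2, h3, h4, h5, hP⟩ := h
      simp only [psupp, Finset.mem_insert] at hx
      push_neg at hx
      exact ⟨Finset.mem_erase.mpr ⟨fun e => hx.1 e.symm, h1⟩,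
        Finset.mem_erase.mpr ⟨fun e => hx.2.1 e.symm, h2⟩, h3, h4, h5, ih hP hx.2.2⟩

lemma psupp_card (P : List (α × α)) : (psupp P).card ≤ 2 * P.length := by
  induction P with
  | nil => simp [psupp]
  | cons p P ih =>
      simp only [psupp, List.length_cons]
      calc (insert p.1 (insert p.2 (psupp P))).card
          ≤ (insert p.2 (psupp P)).card + 1 := Finset.card_insert_le _ _
        _ ≤ (psupp P).card + 1 + 1 := by
            have := Finset.card_insert_le p.2 (psupp P); omega
        _ ≤ 2 * (P.length + 1) := by omega

lemma podVec_ne_zero {P : List (α × α)} {Y : Finset α} (h : podVec P Y ≠ 0) :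
    Y ⊆ psupp P ∧ Y.card = P.length := by
  induction P generalizing Y with
  | nil =>
      simp only [podVec, ne_eq, ite_eq_right_iff, not_forall] at h
      obtain ⟨hY, -⟩ := h
      subst hY
      simp [psupp]
  | cons p P ih =>
      have main : ∀ x, x ∈ Y → x ∈ psupp (p :: P) → podVec P (Y.erase x) ≠ 0 →
          Y ⊆ psupp (p :: P) ∧ Y.card = (p :: P).length := by
        intro x hx hxs hne
        obtain ⟨hsub, hcard⟩ := ih hne
        constructor
        · intro y hy
          by_cases hyx : y = x
          · rw [hyx]; exact hxs
          · exact psupp_subset_cons p P (hsub (Finset.mem_erase.mpr ⟨hyx, hy⟩))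
        · rw [List.length_cons, ← hcard, Finset.card_erase_of_mem hx]
          have : 0 < Y.card := Finset.card_pos.mpr ⟨x, hx⟩
          omega
      simp only [podVec] at h
      by_cases h1 : p.1 ∈ Y
      · by_cases h2 : p.2 ∈ Y
        · rw [if_pos h1, if_pos h2] at h
          have hor : podVec P (Y.erase p.1) ≠ 0 ∨ podVec P (Y.erase p.2) ≠ 0 := by
            by_contra hc; push_neg at hc
            rw [hc.1, hc.2, sub_self] at h; exact h rfl
          rcases hor with hne | hne
          · exact main p.1 h1 (fst_mem_psupp p P) hne
          · exact main p.2 h2 (snd_mem_psupp p P) hne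
        · rw [if_pos h1, if_neg h2, sub_zero] at h
          exact main p.1 h1 (fst_mem_psupp p P) h
      · by_cases h2 : p.2 ∈ Y
        · rw [if_neg h1, if_pos h2, zero_sub, neg_ne_zero] at h
          exact main p.2 h2 (snd_mem_psupp p P) h
        · rw [if_neg h1, if_neg h2, sub_zero] at h
          exact absurd rfl h

lemma podVec_card_ne {P : List (α × α)} {Y : Finset α} (h : Y.card ≠ P.length) :
    podVec P Y = 0 := by
  by_contra h'; exact h (podVec_ne_zero h').2

lemma podVec_not_subset {P : List (α × α)} {Y : Finset α} (h : ¬ Y ⊆ psupp P) :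
    podVec P Y = 0 := by
  by_contra h'; exact h (podVec_ne_zero h').1

lemma podVec_mem_not_supp {P : List (α × α)} {Y : Finset α} {x : α} (hx : x ∈ Y)
    (hxs : x ∉ psupp P) : podVec P Y = 0 :=
  podVec_not_subset fun hsub => hxs (hsub hx)


/-- One component of the down-sum of a lifted function. -/
lemma dSum_lift_component (V : Finset α) (m : Finset α → ℤ) (a : α) (ha : a ∈ V)
    (Y : Finset α) :
    (∑ y ∈ V \ Y, if a ∈ insert y Y then m ((insert y Y).erase a) else 0)
      = if a ∈ Y then dSum (V.erase a) m (Y.erase a) else m Y := by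
  by_cases haY : a ∈ Y
  · rw [if_pos haY]
    have hidx : V \ Y = (V.erase a) \ (Y.erase a) := by
      ext x
      simp only [Finset.mem_sdiff, Finset.mem_erase]
      constructor
      · rintro ⟨hxV, hxY⟩
        exact ⟨⟨fun e => hxY (e ▸ haY), hxV⟩, fun ⟨hne, hmem⟩ => hxY hmem⟩
      · rintro ⟨⟨hne, hxV⟩, hx⟩
        refine ⟨hxV, fun hxY => hx ⟨hne, hxY⟩⟩
    rw [dSum, ← hidx]
    refine Finset.sum_congr rfl fun y hy => ?_
    have hyY : y ∉ Y := (Finset.mem_sdiff.mp hy).2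
    have hya : y ≠ a := fun e => hyY (e ▸ haY)
    rw [if_pos (Finset.mem_insert_of_mem haY), Finset.erase_insert_of_ne hya]
  · rw [if_neg haY]
    have : ∀ y ∈ V \ Y, (if a ∈ insert y Y then m ((insert y Y).erase a) else 0)
        = if y = a then m Y else 0 := by
      intro y hy
      by_cases hya : y = a
      · subst hya
        rw [if_pos (Finset.mem_insert_self y Y), if_pos rfl, Finset.erase_insert haY]
      · rw [if_neg, if_neg hya]
        simp only [Finset.mem_insert]
        rintro (e | e)
        · exact hya e.symm
        · exact haY e
    rw [Finset.sum_congr rfl this, Finset.sum_ite_eq' (V \ Y) a (fun _ => m Y)]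
    rw [if_pos (Finset.mem_sdiff.mpr ⟨ha, haY⟩)]

lemma dSum_podVec (V : Finset α) (P : List (α × α)) (hP : podOK V P) (Y : Finset α) :
    dSum V (podVec P) Y = 0 := by
  induction P generalizing V Y with
  | nil =>
      refine Finset.sum_eq_zero fun y hy => ?_
      simp [podVec, Finset.insert_ne_empty]
  | cons p P ih =>
      obtain ⟨h1V, h2V, hne, h1s, h2s, hPO⟩ := hP
      have expand : dSum V (podVec (p :: P)) Y
          = (∑ y ∈ V \ Y, if p.1 ∈ insert y Y then podVec P ((insert y Y).erase p.1) else 0)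
            - (∑ y ∈ V \ Y, if p.2 ∈ insert y Y then podVec P ((insert y Y).erase p.2) else 0) := by
        rw [dSum, ← Finset.sum_sub_distrib]
        rfl
      rw [expand, dSum_lift_component V (podVec P) p.1 h1V Y,
        dSum_lift_component V (podVec P) p.2 h2V Y]
      by_cases hy1 : p.1 ∈ Y <;> by_cases hy2 : p.2 ∈ Y
      · rw [if_pos hy1, if_pos hy2, ih _ (podOK_erase hPO h1s), ih _ (podOK_erase hPO h2s), sub_zero]
      · rw [if_pos hy1, if_neg hy2, ih _ (podOK_erase hPO h1s),
          podVec_mem_not_supp hy1 h1s, sub_zero]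
      · rw [if_neg hy1, if_pos hy2, ih _ (podOK_erase hPO h2s),
          podVec_mem_not_supp hy2 h2s, zero_sub, neg_zero]
      · rw [if_neg hy1, if_neg hy2, sub_self]


lemma erase_sdiff_comm' (Y R : Finset α) (x : α) :
    (Y.erase x) \ R = (Y \ R).erase x := by
  ext y
  simp only [Finset.mem_sdiff, Finset.mem_erase]
  tauto

/-- Realizing a pod vector by a pod block weighting. -/
lemma incSum_podBlock (b' : ℕ) (P : List (α × α)) :
    ∀ (V : Finset α) (R : Finset α), podOK V P → R ⊆ V → (∀ x ∈ R, x ∉ psupp P) →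
    R.card = b' → ∀ Y : Finset α,
    incSum V (b' + P.length) (podBlock P R) Y = podVec P (Y \ R) := by
  induction P with
  | nil =>
      intro V R hP hRV hRP hRc Y
      simp only [List.length_nil]
      have : incSum V (b' + 0) (podBlock [] R) Y
          = ∑ X ∈ (V.powersetCard b').filter (fun X => Y ⊆ X), (if X = R then 1 else 0) := rfl
      rw [this, Finset.sum_ite_eq' ((V.powersetCard b').filter (fun X => Y ⊆ X)) R (fun _ => (1:ℤ))]
      have hmem : R ∈ (V.powersetCard b').filter (fun X => Y ⊆ X) ↔ Y ⊆ R := by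
        simp [Finset.mem_powersetCard, hRV, hRc]
      show (if R ∈ _ then (1:ℤ) else 0) = podVec [] (Y \ R)
      rw [show podVec ([] : List (α × α)) (Y \ R) = if Y \ R = ∅ then 1 else 0 from rfl]
      by_cases hYR : Y ⊆ R
      · rw [if_pos (hmem.mpr hYR), if_pos (Finset.sdiff_eq_empty_iff_subset.mpr hYR)]
      · rw [if_neg (fun hc => hYR (hmem.mp hc)),
          if_neg (fun hc => hYR (Finset.sdiff_eq_empty_iff_subset.mp hc))]
  | cons p P ih =>
      intro V R hP hRV hRP hRc Y
      obtain ⟨h1V, h2V, hne, h1s, h2s, hPO⟩ := hP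
      have h1R : p.1 ∉ R := fun hc => hRP p.1 hc (fst_mem_psupp p P)
      have h2R : p.2 ∉ R := fun hc => hRP p.2 hc (snd_mem_psupp p P)
      have hRP' : ∀ x ∈ R, x ∉ psupp P := fun x hx hc =>
        hRP x hx (by simp [psupp, hc])
      have hsplit : incSum V (b' + (p :: P).length) (podBlock (p :: P) R) Y
          = incSum V (b' + P.length + 1)
              (fun X => if p.1 ∈ X then podBlock P R (X.erase p.1) else 0) Y
            - incSum V (b' + P.length + 1)
              (fun X => if p.2 ∈ X then podBlock P R (X.erase p.2) else 0) Y := by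
        rw [incSum, incSum, incSum, ← Finset.sum_sub_distrib]
        rfl
      rw [hsplit, incSum_lift V (b' + P.length) _ p.1 h1V Y,
        incSum_lift V (b' + P.length) _ p.2 h2V Y,
        ih (V.erase p.1) R (podOK_erase hPO h1s)
          (fun x hx => Finset.mem_erase.mpr ⟨fun e => h1R (e ▸ hx), hRV hx⟩) hRP' hRc,
        ih (V.erase p.2) R (podOK_erase hPO h2s)
          (fun x hx => Finset.mem_erase.mpr ⟨fun e => h2R (e ▸ hx), hRV hx⟩) hRP' hRc]
      show _ = (if p.1 ∈ Y \ R then podVec P ((Y \ R).erase p.1) else 0)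
          - (if p.2 ∈ Y \ R then podVec P ((Y \ R).erase p.2) else 0)
      have comp : ∀ x : α, x ∉ psupp P → x ∉ R →
          podVec P ((Y.erase x) \ R) = if x ∈ Y \ R then podVec P ((Y \ R).erase x) else
            podVec P (Y \ R) := by
        intro x hxs hxR
        by_cases hxY : x ∈ Y
        · rw [if_pos (Finset.mem_sdiff.mpr ⟨hxY, hxR⟩), erase_sdiff_comm']
        · rw [if_neg (fun hc => hxY (Finset.mem_sdiff.mp hc).1), Finset.erase_eq_of_notMem hxY]
      rw [comp p.1 h1s h1R, comp p.2 h2s h2R]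
      by_cases hy1 : p.1 ∈ Y \ R <;> by_cases hy2 : p.2 ∈ Y \ R
      · simp [hy1, hy2]
      · simp [hy1, hy2, podVec_mem_not_supp hy1 h1s]
      · simp [hy1, hy2, podVec_mem_not_supp hy2 h2s]
      · simp [hy1, hy2]


/-- Adjointness of up and down operators. -/
lemma adjoint_aux (V : Finset α) (t : ℕ) (g h : Finset α → ℤ) :
    ∑ Z ∈ V.powersetCard (t+1), (g Z * ∑ z ∈ Z, h (Z.erase z))
      = ∑ Y ∈ V.powersetCard t, (h Y * dSum V g Y) := by
  unfold dSum
  simp_rw [Finset.mul_sum]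
  rw [Finset.sum_sigma', Finset.sum_sigma']
  refine Finset.sum_nbij' (fun q => ⟨q.1.erase q.2, q.2⟩) (fun q => ⟨insert q.2 q.1, q.2⟩)
    ?_ ?_ ?_ ?_ ?_
  · rintro ⟨Z, z⟩ hq
    simp only [Finset.mem_sigma, Finset.mem_powersetCard] at hq ⊢
    obtain ⟨⟨hZV, hZc⟩, hz⟩ := hq
    refine ⟨⟨(Finset.erase_subset z Z).trans hZV, ?_⟩, Finset.mem_sdiff.mpr ⟨hZV hz, Finset.notMem_erase z Z⟩⟩
    rw [Finset.card_erase_of_mem hz, hZc]; rfl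
  · rintro ⟨Y, y⟩ hq
    simp only [Finset.mem_sigma, Finset.mem_powersetCard, Finset.mem_sdiff] at hq ⊢
    obtain ⟨⟨hYV, hYc⟩, hyV, hyY⟩ := hq
    exact ⟨⟨Finset.insert_subset hyV hYV, by rw [Finset.card_insert_of_notMem hyY, hYc]⟩,
      Finset.mem_insert_self y Y⟩
  · rintro ⟨Z, z⟩ hq
    simp only [Finset.mem_sigma, Finset.mem_powersetCard] at hq
    have : insert z (Z.erase z) = Z := Finset.insert_erase hq.2
    simp [this]
  · rintro ⟨Y, y⟩ hq
    simp only [Finset.mem_sigma, Finset.mem_powersetCard, Finset.mem_sdiff] at hq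
    have : (insert y Y).erase y = Y := Finset.erase_insert hq.2.2
    simp [this]
  · rintro ⟨Z, z⟩ hq
    simp only [Finset.mem_sigma, Finset.mem_powersetCard] at hq
    have : insert z (Z.erase z) = Z := Finset.insert_erase hq.2
    rw [this]
    ring

/-- Injectivity of the down operator above the middle layer. -/
lemma ker_zero (V : Finset α) (t : ℕ) (h : Finset α → ℤ)
    (hsupp : ∀ Y, h Y ≠ 0 → Y ⊆ V ∧ Y.card = t)
    (hker : ∀ Y, Y ⊆ V → Y.card + 1 = t → dSum V h Y = 0)
    (hvt : V.card < 2 * t) : ∀ Y, h Y = 0 := by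
  set U : Finset α → ℤ := fun Z => ∑ z ∈ Z, h (Z.erase z) with hU
  have key : ∀ Y ∈ V.powersetCard t, dSum V U Y = ((V.card : ℤ) - 2 * t) * h Y := by
    intro Y hY
    rw [Finset.mem_powersetCard] at hY
    obtain ⟨hYV, hYc⟩ := hY
    have expand : ∀ y ∈ V \ Y, U (insert y Y)
        = h Y + ∑ z ∈ Y, h (insert y (Y.erase z)) := by
      intro y hy
      have hyY : y ∉ Y := (Finset.mem_sdiff.mp hy).2
      rw [hU]
      simp only []
      rw [Finset.sum_insert hyY, Finset.erase_insert hyY]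
      congr 1
      refine Finset.sum_congr rfl fun z hz => ?_
      have hyz : y ≠ z := fun e => hyY (e ▸ hz)
      rw [Finset.erase_insert_of_ne hyz]
    have inner : ∀ z ∈ Y, (∑ y ∈ V \ Y, h (insert y (Y.erase z))) = - h Y := by
      intro z hz
      have hzV : z ∈ V := hYV hz
      have hznot : z ∉ V \ Y := fun hc => (Finset.mem_sdiff.mp hc).2 hz
      have hVsplit : V \ (Y.erase z) = insert z (V \ Y) := by
        ext x
        simp only [Finset.mem_sdiff, Finset.mem_erase, Finset.mem_insert]
        constructor
        · rintro ⟨hxV, hx⟩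
          by_cases hxz : x = z
          · exact Or.inl hxz
          · exact Or.inr ⟨hxV, fun hxY => hx ⟨hxz, hxY⟩⟩
        · rintro (rfl | ⟨hxV, hxY⟩)
          · exact ⟨hzV, fun hc => hc.1 rfl⟩
          · exact ⟨hxV, fun hc => hxY hc.2⟩
      have hd : dSum V h (Y.erase z) = 0 := by
        apply hker
        · exact (Finset.erase_subset z Y).trans hYV
        · rw [Finset.card_erase_of_mem hz, hYc]
          have : 0 < Y.card := Finset.card_pos.mpr ⟨z, hz⟩
          omega
      rw [dSum, hVsplit, Finset.sum_insert hznot, Finset.insert_erase hz] at hd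
      linarith
    rw [dSum, Finset.sum_congr rfl expand, Finset.sum_add_distrib, Finset.sum_const,
      Finset.sum_comm, Finset.sum_congr rfl inner, Finset.sum_const,
      Finset.card_sdiff_of_subset hYV, hYc]
    have htV : t ≤ V.card := hYc ▸ Finset.card_le_card hYV
    rw [nsmul_eq_mul, nsmul_eq_mul, Nat.cast_sub htV]
    push_cast
    ring
  have hA : ∑ Z ∈ V.powersetCard (t+1), U Z * U Z
      = ((V.card : ℤ) - 2 * t) * ∑ Y ∈ V.powersetCard t, h Y * h Y := by
    rw [adjoint_aux V t U h, Finset.mul_sum]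
    refine Finset.sum_congr rfl fun Y hY => ?_
    rw [key Y hY]
    ring
  have h1 : (0:ℤ) ≤ ∑ Z ∈ V.powersetCard (t+1), U Z * U Z :=
    Finset.sum_nonneg fun Z _ => mul_self_nonneg (U Z)
  have h2 : (0:ℤ) ≤ ∑ Y ∈ V.powersetCard t, h Y * h Y :=
    Finset.sum_nonneg fun Y _ => mul_self_nonneg (h Y)
  have hneg : ((V.card : ℤ) - 2 * t) < 0 := by
    push_cast
    omega
  have hzero : ∑ Y ∈ V.powersetCard t, h Y * h Y = 0 := by nlinarith
  have heach := (Finset.sum_eq_zero_iff_of_nonneg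
    (fun Y _ => mul_self_nonneg (h Y))).mp hzero
  intro Y
  by_cases hY : Y ∈ V.powersetCard t
  · have := heach Y hY
    exact mul_self_eq_zero.mp this
  · by_contra h0
    exact hY (Finset.mem_powersetCard.mpr (hsupp Y h0))


lemma span_t0 (V : Finset α) (h : Finset α → ℤ)
    (hsupp : ∀ Y, h Y ≠ 0 → Y ⊆ V ∧ Y.card = 0) :
    ∃ L : List (ℤ × List (α × α)),
      (∀ q ∈ L, podOK V q.2 ∧ q.2.length = 0) ∧
      ∀ Y, h Y = (L.map (fun q => q.1 * podVec q.2 Y)).sum := by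
  refine ⟨[(h ∅, [])], ?_, ?_⟩
  · intro q hq
    simp only [List.mem_singleton] at hq
    subst hq
    exact ⟨trivial, rfl⟩
  · intro Y
    by_cases hY : Y = ∅
    · subst hY
      simp [podVec]
    · have h0 : h Y = 0 := by
        by_contra h0
        exact hY (Finset.card_eq_zero.mp (hsupp Y h0).2)
      simp [podVec, hY, h0]

lemma ker_span : ∀ (n : ℕ) (V : Finset α), V.card = n → ∀ (t : ℕ) (h : Finset α → ℤ),
    (∀ Y, h Y ≠ 0 → Y ⊆ V ∧ Y.card = t) →
    (∀ Y, Y ⊆ V → Y.card + 1 = t → dSum V h Y = 0) →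
    ∃ L : List (ℤ × List (α × α)),
      (∀ q ∈ L, podOK V q.2 ∧ q.2.length = t) ∧
      ∀ Y, h Y = (L.map (fun q => q.1 * podVec q.2 Y)).sum := by
  intro n
  induction n with
  | zero =>
      intro V hV t h hsupp hker
      rcases Nat.eq_zero_or_pos t with rfl | ht
      · exact span_t0 V h hsupp
      · refine ⟨[], by simp, fun Y => ?_⟩
        simpa using ker_zero V t h hsupp hker (by omega) Y
  | succ n IH =>
      intro V hV t h hsupp hker
      by_cases hlt : V.card < 2 * t
      · refine ⟨[], by simp, fun Y => ?_⟩
        simpa using ker_zero V t h hsupp hker hlt Y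
      push_neg at hlt
      rcases t with _ | t
      · exact span_t0 V h hsupp
      have hVpos : 0 < V.card := by omega
      obtain ⟨v, hv⟩ := Finset.card_pos.mp hVpos
      have hVe : (V.erase v).card = n := by rw [Finset.card_erase_of_mem hv, hV]; rfl
      set h1 : Finset α → ℤ := fun Y => if v ∈ Y then 0 else h (insert v Y) with hh1
      have hsupp1 : ∀ Y, h1 Y ≠ 0 → Y ⊆ V.erase v ∧ Y.card = t := by
        intro Y hY
        have hY' : (if v ∈ Y then (0:ℤ) else h (insert v Y)) ≠ 0 := hY
        by_cases hvY : v ∈ Y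
        · rw [if_pos hvY] at hY'; exact absurd rfl hY'
        · rw [if_neg hvY] at hY'
          obtain ⟨hs, hc⟩ := hsupp _ hY'
          have hYV : Y ⊆ V := (Finset.subset_insert v Y).trans hs
          refine ⟨Finset.subset_erase.mpr ⟨hYV, hvY⟩, ?_⟩
          rw [Finset.card_insert_of_notMem hvY] at hc
          omega
      have hker1 : ∀ Y, Y ⊆ V.erase v → Y.card + 1 = t → dSum (V.erase v) h1 Y = 0 := by
        intro Y hYe hYc
        have hvY : v ∉ Y := (Finset.subset_erase.mp hYe).2
        have hYV : Y ⊆ V := (Finset.subset_erase.mp hYe).1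
        have hidx : (V.erase v) \ Y = V \ (insert v Y) := by
          ext x
          simp only [Finset.mem_sdiff, Finset.mem_erase, Finset.mem_insert]
          tauto
        have hterm : ∀ y ∈ (V.erase v) \ Y, h1 (insert y Y) = h (insert y (insert v Y)) := by
          intro y hy
          have hyv : y ≠ v := (Finset.mem_erase.mp (Finset.mem_sdiff.mp hy).1).1
          have : v ∉ insert y Y := by
            simp only [Finset.mem_insert]
            rintro (e | e)
            · exact hyv e.symm
            · exact hvY e
          show (if v ∈ insert y Y then (0:ℤ) else h (insert v (insert y Y)))
            = h (insert y (insert v Y))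
          rw [if_neg this, Finset.insert_comm]
        rw [dSum, Finset.sum_congr rfl hterm, hidx]
        rw [show (∑ y ∈ V \ insert v Y, h (insert y (insert v Y))) = dSum V h (insert v Y) from rfl]
        apply hker
        · exact Finset.insert_subset hv hYV
        · rw [Finset.card_insert_of_notMem hvY]
          omega
      obtain ⟨L₁, hL₁ok, hL₁sum⟩ := IH (V.erase v) hVe t h1 hsupp1 hker1
      set wfun : List (α × α) → α :=
        fun P => if hh : ((V.erase v) \ psupp P).Nonempty then hh.choose else v with hwfun
      have hw : ∀ q ∈ L₁, wfun q.2 ∈ (V.erase v) \ psupp q.2 := by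
        intro q hq
        obtain ⟨hok, hlen⟩ := hL₁ok q hq
        have h2 : psupp q.2 ⊆ V.erase v := psupp_subset hok
        have hcard : 0 < ((V.erase v) \ psupp q.2).card := by
          rw [Finset.card_sdiff_of_subset h2, hVe]
          have h1c := psupp_card q.2
          rw [hlen] at h1c
          omega
        have hne : ((V.erase v) \ psupp q.2).Nonempty := Finset.card_pos.mp hcard
        rw [hwfun]
        simp only [dif_pos hne]
        exact hne.choose_spec
      have hvns : ∀ q ∈ L₁, v ∉ psupp q.2 := by
        intro q hq hc
        exact (Finset.notMem_erase v V) (psupp_subset (hL₁ok q hq).1 hc)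
      have hPhatOK : ∀ q ∈ L₁, podOK V ((v, wfun q.2) :: q.2) := by
        intro q hq
        obtain ⟨hok, hlen⟩ := hL₁ok q hq
        have hwq := Finset.mem_sdiff.mp (hw q hq)
        have hwe := Finset.mem_erase.mp hwq.1
        exact ⟨hv, hwe.2, fun e => hwe.1 e.symm, hvns q hq, hwq.2,
          podOK_mono (Finset.erase_subset v V) hok⟩
      have hvnw : ∀ q ∈ L₁, v ≠ wfun q.2 := by
        intro q hq e
        exact (Finset.mem_erase.mp (Finset.mem_sdiff.mp (hw q hq)).1).1 e.symm
      have hpodv : ∀ q ∈ L₁, ∀ Y, v ∈ Y →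
          podVec ((v, wfun q.2) :: q.2) Y = podVec q.2 (Y.erase v) := by
        intro q hq Y hvY
        show (if v ∈ Y then podVec q.2 (Y.erase v) else 0)
            - (if wfun q.2 ∈ Y then podVec q.2 (Y.erase (wfun q.2)) else 0)
          = podVec q.2 (Y.erase v)
        rw [if_pos hvY]
        by_cases hwY : wfun q.2 ∈ Y
        · rw [if_pos hwY,
            podVec_mem_not_supp (Finset.mem_erase.mpr ⟨hvnw q hq, hvY⟩) (hvns q hq), sub_zero]
        · rw [if_neg hwY, sub_zero]
      set g : Finset α → ℤ :=
        fun Y => (L₁.map (fun q => q.1 * podVec ((v, wfun q.2) :: q.2) Y)).sum with hg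
      set h' : Finset α → ℤ := fun Y => h Y - g Y with hh'
      have claim_b : ∀ Y, v ∈ Y → h' Y = 0 := by
        intro Y hvY
        have hgY : g Y = (L₁.map (fun q => q.1 * podVec q.2 (Y.erase v))).sum := by
          show (L₁.map (fun q => q.1 * podVec ((v, wfun q.2) :: q.2) Y)).sum = _
          congr 1
          apply List.map_congr_left
          intro q hq
          rw [hpodv q hq Y hvY]
        have hh1Y : h1 (Y.erase v) = h Y := by
          show (if v ∈ Y.erase v then (0:ℤ) else h (insert v (Y.erase v))) = h Y
          rw [if_neg (Finset.notMem_erase v Y), Finset.insert_erase hvY]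
        show h Y - g Y = 0
        rw [hgY, ← hL₁sum (Y.erase v), hh1Y, sub_self]
      have hsupp' : ∀ Y, h' Y ≠ 0 → Y ⊆ V.erase v ∧ Y.card = t + 1 := by
        intro Y hne
        have hvY : v ∉ Y := fun hc => hne (claim_b Y hc)
        have hmain : Y ⊆ V ∧ Y.card = t + 1 := by
          by_contra hc
          apply hne
          have hzY : h Y = 0 := by
            by_contra h0; exact hc (hsupp Y h0)
          have hzg : g Y = 0 := by
            show (L₁.map (fun q => q.1 * podVec ((v, wfun q.2) :: q.2) Y)).sum = 0
            apply List.sum_eq_zero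
            intro x hx
            rw [List.mem_map] at hx
            obtain ⟨q, hq, rfl⟩ := hx
            have hz : podVec ((v, wfun q.2) :: q.2) Y = 0 := by
              by_contra h0
              obtain ⟨hsub, hcard⟩ := podVec_ne_zero h0
              refine hc ⟨hsub.trans (psupp_subset (hPhatOK q hq)), ?_⟩
              rw [hcard, List.length_cons, (hL₁ok q hq).2]
            rw [hz, mul_zero]
          show h Y - g Y = 0
          rw [hzY, hzg, sub_zero]
        exact ⟨Finset.subset_erase.mpr ⟨hmain.1, hvY⟩, hmain.2⟩
      have hker' : ∀ Y, Y ⊆ V.erase v → Y.card + 1 = t + 1 → dSum (V.erase v) h' Y = 0 := by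
        intro Y hYe hYc
        have hvY : v ∉ Y := (Finset.subset_erase.mp hYe).2
        have hsplit : V \ Y = insert v ((V.erase v) \ Y) := by
          ext x
          simp only [Finset.mem_sdiff, Finset.mem_erase, Finset.mem_insert]
          constructor
          · rintro ⟨hxV, hxY⟩
            by_cases hxv : x = v
            · exact Or.inl hxv
            · exact Or.inr ⟨⟨hxv, hxV⟩, hxY⟩
          · rintro (rfl | ⟨⟨hxv, hxV⟩, hxY⟩)
            · exact ⟨hv, hvY⟩
            · exact ⟨hxV, hxY⟩
        have hvin : v ∉ (V.erase v) \ Y := fun hc =>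
          (Finset.notMem_erase v V) (Finset.mem_sdiff.mp hc).1
        have e1 : dSum V h' Y = h' (insert v Y) + dSum (V.erase v) h' Y := by
          rw [dSum, hsplit, Finset.sum_insert hvin]; rfl
        have e2 : h' (insert v Y) = 0 := claim_b _ (Finset.mem_insert_self v Y)
        have e3 : dSum V h' Y = 0 := by
          rw [hh']
          rw [dSum_sub V h g Y]
          have hgz : dSum V g Y = 0 := by
            have hdl := dSum_list V L₁ (fun q Z => q.1 * podVec ((v, wfun q.2) :: q.2) Z) Y
            refine Eq.trans (Eq.trans ?_ hdl) ?_
            · rfl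
            apply List.sum_eq_zero
            intro x hx
            rw [List.mem_map] at hx
            obtain ⟨q, hq, rfl⟩ := hx
            rw [dSum_mul, dSum_podVec V _ (hPhatOK q hq), mul_zero]
          have hhz : dSum V h Y = 0 :=
            hker Y (Finset.subset_erase.mp hYe).1 hYc
          rw [hgz, hhz, sub_zero]
        rw [e1, e2, zero_add] at e3
        exact e3
      obtain ⟨L₂, hL₂ok, hL₂sum⟩ := IH (V.erase v) hVe (t+1) h' hsupp' hker'
      refine ⟨L₂ ++ L₁.map (fun q => (q.1, (v, wfun q.2) :: q.2)), ?_, ?_⟩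
      · intro q hq
        rcases List.mem_append.mp hq with hq2 | hq1
        · exact ⟨podOK_mono (Finset.erase_subset v V) (hL₂ok q hq2).1, (hL₂ok q hq2).2⟩
        · rw [List.mem_map] at hq1
          obtain ⟨q', hq', rfl⟩ := hq1
          exact ⟨hPhatOK q' hq', by rw [List.length_cons, (hL₁ok q' hq').2]⟩
      · intro Y
        rw [List.map_append, List.sum_append, List.map_map]
        have hcomp : (L₁.map ((fun q => q.1 * podVec q.2 Y) ∘
            (fun q => (q.1, (v, wfun q.2) :: q.2)))).sum = g Y := rfl
        rw [hcomp, ← hL₂sum Y]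
        show h Y = h Y - g Y + g Y
        ring


/-- Existence of integral designs in the range `b + t ≤ |V|`. -/
lemma exists_design_of_le (V : Finset α) (b : ℕ) :
    ∀ (t : ℕ) (μ : ℕ → ℤ), t < b → b + t ≤ V.card →
    (∀ s, s < t → ((V.card - s : ℕ) : ℤ) * μ (s + 1) = ((b - s : ℕ) : ℤ) * μ s) →
    ∃ c : Finset α → ℤ, ∀ Y, Y ⊆ V → Y.card ≤ t → incSum V b c Y = μ Y.card := by
  intro t
  induction t with
  | zero =>
      intro μ htb hbtv _
      obtain ⟨X₀, hX₀V, hX₀c⟩ := Finset.exists_subset_card_eq (s := V) (n := b) (by omega)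
      refine ⟨fun X => if X = X₀ then μ 0 else 0, ?_⟩
      intro Y hYV hYc
      have hY : Y = ∅ := Finset.card_eq_zero.mp (Nat.le_zero.mp hYc)
      subst hY
      show (∑ X ∈ (V.powersetCard b).filter (fun X => (∅:Finset α) ⊆ X),
          if X = X₀ then μ 0 else 0) = μ (∅:Finset α).card
      rw [Finset.sum_ite_eq' _ X₀ (fun _ => μ 0)]
      rw [if_pos]
      · rfl
      · simp [Finset.mem_powersetCard, hX₀V, hX₀c]
  | succ t iht =>
      intro μ htb hbtv hrel
      obtain ⟨c', hc'⟩ := iht μ (by omega) (by omega) (fun s hs => hrel s (by omega))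
      set d : Finset α → ℤ :=
        fun Y => if Y ⊆ V ∧ Y.card = t + 1 then μ (t+1) - incSum V b c' Y else 0 with hd
      have hdval : ∀ Y, Y ⊆ V → Y.card = t + 1 → d Y = μ (t+1) - incSum V b c' Y := by
        intro Y h1 h2
        show (if Y ⊆ V ∧ Y.card = t + 1 then μ (t+1) - incSum V b c' Y else 0) = _
        rw [if_pos ⟨h1, h2⟩]
      have hdsupp : ∀ Y, d Y ≠ 0 → Y ⊆ V ∧ Y.card = t + 1 := by
        intro Y hY
        by_contra hc
        apply hY
        show (if Y ⊆ V ∧ Y.card = t + 1 then μ (t+1) - incSum V b c' Y else 0) = 0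
        rw [if_neg hc]
      have hdker : ∀ Y, Y ⊆ V → Y.card + 1 = t + 1 → dSum V d Y = 0 := by
        intro Y hYV hYc
        have hYc' : Y.card = t := by omega
        have hterm : ∀ y ∈ V \ Y, d (insert y Y) = μ (t+1) - incSum V b c' (insert y Y) := by
          intro y hy
          obtain ⟨hyV, hyY⟩ := Finset.mem_sdiff.mp hy
          exact hdval _ (Finset.insert_subset hyV hYV) (by rw [Finset.card_insert_of_notMem hyY, hYc'])
        rw [dSum, Finset.sum_congr rfl hterm, Finset.sum_sub_distrib, Finset.sum_const]
        rw [show (∑ y ∈ V \ Y, incSum V b c' (insert y Y)) = dSum V (incSum V b c') Y from rfl]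
        rw [dSum_incSum, hc' Y hYV (by omega), Finset.card_sdiff_of_subset hYV, hYc']
        have h1 := hrel t (by omega)
        have htV : t ≤ V.card := by omega
        have htb' : t ≤ b := by omega
        rw [Nat.cast_sub htV, Nat.cast_sub htb'] at h1
        rw [nsmul_eq_mul, Nat.cast_sub htV]
        push_cast at h1 ⊢
        linarith
      obtain ⟨L, hLok, hLsum⟩ := ker_span V.card V rfl (t+1) d hdsupp hdker
      -- choose roots
      set Rf : List (α × α) → Finset α :=
        fun P => if hh : b - (t+1) ≤ (V \ psupp P).card
          then (Finset.exists_subset_card_eq hh).choose else ∅ with hRf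
      have hRspec : ∀ q ∈ L, Rf q.2 ⊆ V \ psupp q.2 ∧ (Rf q.2).card = b - (t+1) := by
        intro q hq
        obtain ⟨hok, hlen⟩ := hLok q hq
        have hsub : psupp q.2 ⊆ V := psupp_subset hok
        have hcard : b - (t+1) ≤ (V \ psupp q.2).card := by
          rw [Finset.card_sdiff_of_subset hsub]
          have := psupp_card q.2
          rw [hlen] at this
          omega
        have hch := (Finset.exists_subset_card_eq hcard).choose_spec
        rw [hRf]
        simp only [dif_pos hcard]
        exact hch
      have hExt : ∀ q ∈ L, ∀ Y : Finset α,
          incSum V b (podBlock q.2 (Rf q.2)) Y = podVec q.2 (Y \ Rf q.2) := by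
        intro q hq Y
        obtain ⟨hok, hlen⟩ := hLok q hq
        obtain ⟨hR1, hR2⟩ := hRspec q hq
        have hb : b = (b - (t+1)) + q.2.length := by rw [hlen]; omega
        rw [hb]
        exact incSum_podBlock (b - (t+1)) q.2 V (Rf q.2) hok
          (hR1.trans Finset.sdiff_subset)
          (fun x hx => (Finset.mem_sdiff.mp (hR1 hx)).2) hR2 Y
      refine ⟨fun X => c' X + (L.map (fun q => q.1 * podBlock q.2 (Rf q.2) X)).sum, ?_⟩
      intro Y hYV hYc
      rw [incSum_add, incSum_list]
      have hmap : ∀ q ∈ L, incSum V b (fun X => q.1 * podBlock q.2 (Rf q.2) X) Y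
          = q.1 * podVec q.2 Y := by
        intro q hq
        rw [incSum_mul, hExt q hq Y]
        congr 1
        obtain ⟨hok, hlen⟩ := hLok q hq
        by_cases hdis : Y \ Rf q.2 = Y
        · rw [hdis]
        · have hwit : ∃ x ∈ Y, x ∈ Rf q.2 := by
            by_contra hc
            push_neg at hc
            exact hdis (Finset.sdiff_eq_self_iff_disjoint.mpr
              (Finset.disjoint_left.mpr hc))
          obtain ⟨x, hxY, hxR⟩ := hwit
          have hx' : x ∉ Y \ Rf q.2 := fun hc => (Finset.mem_sdiff.mp hc).2 hxR
          have hss : Y \ Rf q.2 ⊂ Y := Finset.ssubset_iff_of_subset Finset.sdiff_subset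
            |>.mpr ⟨x, hxY, hx'⟩
          have hlt : (Y \ Rf q.2).card < Y.card := Finset.card_lt_card hss
          have hz1 : podVec q.2 (Y \ Rf q.2) = 0 := by
            apply podVec_card_ne
            rw [hlen]
            omega
          have hz2 : podVec q.2 Y = 0 :=
            podVec_mem_not_supp hxY (Finset.mem_sdiff.mp ((hRspec q hq).1 hxR)).2
          rw [hz1, hz2]
      have hsum2 : (L.map (fun q => incSum V b (fun X => q.1 * podBlock q.2 (Rf q.2) X) Y)).sum
          = (L.map (fun q => q.1 * podVec q.2 Y)).sum :=
        congrArg List.sum (List.map_congr_left hmap)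
      rw [hsum2, ← hLsum Y]
      by_cases hcase : Y.card = t + 1
      · rw [hdval Y hYV hcase, hcase]
        ring
      · have hd0 : d Y = 0 := by
          show (if Y ⊆ V ∧ Y.card = t + 1 then μ (t+1) - incSum V b c' Y else 0) = 0
          rw [if_neg (fun hc => hcase hc.2)]
        rw [hd0, add_zero]
        exact hc' Y hYV (by omega)


/-- Alternating binomial identity. -/
lemma altsum : ∀ (m b r : ℕ), m ≤ b →
    (∑ k ∈ Finset.range (m+1),
        (-1:ℤ)^k * (m.choose k : ℤ) * ((b + m + r - k).choose (b - k) : ℤ))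
      = ((b+r).choose b : ℤ) := by
  intro m
  induction m with
  | zero =>
      intro b r _
      simp
  | succ m ih =>
      intro b r hmb
      have hb1 : 1 ≤ b := by omega
      have step1 : ∀ k ∈ Finset.range (m+2),
          (-1:ℤ)^k * ((m+1).choose k : ℤ) * ((b + (m+1) + r - k).choose (b - k) : ℤ)
          = (-1:ℤ)^k * (m.choose k : ℤ) * ((b + m + (r+1) - k).choose (b - k) : ℤ)
            + (-1:ℤ)^k * (if k = 0 then 0 else (m.choose (k-1) : ℤ))
                * ((b + (m+1) + r - k).choose (b - k) : ℤ) := by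
        intro k _
        have harg : b + (m+1) + r - k = b + m + (r+1) - k := by omega
        rw [harg]
        have hch : ((m+1).choose k : ℤ)
            = (m.choose k : ℤ) + (if k = 0 then 0 else (m.choose (k-1) : ℤ)) := by
          rcases k with _ | j
          · simp
          · rw [if_neg (Nat.succ_ne_zero j)]
            have hcc := Nat.choose_succ_succ m j
            push_cast [hcc]
            push_cast [show j + 1 - 1 = j from rfl]
            ring
        rw [hch]
        ring
      rw [Finset.sum_congr rfl step1, Finset.sum_add_distrib]
      have hA : (∑ k ∈ Finset.range (m+2),
            (-1:ℤ)^k * (m.choose k : ℤ) * ((b + m + (r+1) - k).choose (b - k) : ℤ))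
          = ((b + (r+1)).choose b : ℤ) := by
        rw [Finset.sum_range_succ, Nat.choose_succ_self]
        norm_num
        exact ih b (r+1) (by omega)
      have hB : (∑ k ∈ Finset.range (m+2),
            (-1:ℤ)^k * (if k = 0 then 0 else (m.choose (k-1) : ℤ))
              * ((b + (m+1) + r - k).choose (b - k) : ℤ))
          = -((((b-1) + (r+1)).choose (b-1) : ℕ) : ℤ) := by
        rw [Finset.sum_range_succ']
        have step2 : ∀ k ∈ Finset.range (m+1),
            (-1:ℤ)^(k+1) * (if k + 1 = 0 then 0 else (m.choose ((k+1)-1) : ℤ))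
              * ((b + (m+1) + r - (k+1)).choose (b - (k+1)) : ℤ)
            = -((-1:ℤ)^k * (m.choose k : ℤ)
                * (((b-1) + m + (r+1) - k).choose ((b-1) - k) : ℤ)) := by
          intro k _
          rw [if_neg (Nat.succ_ne_zero k)]
          have h1 : b + (m+1) + r - (k+1) = (b-1) + m + (r+1) - k := by omega
          have h2 : b - (k+1) = (b-1) - k := by omega
          have h3 : (k+1) - 1 = k := rfl
          rw [h1, h2, h3]
          ring
        rw [Finset.sum_congr rfl step2]
        rw [if_pos rfl]
        rw [Finset.sum_neg_distrib]
        rw [ih (b-1) (r+1) (by omega)]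
        ring
      rw [hA, hB]
      obtain ⟨b', rfl⟩ : ∃ b', b = b' + 1 := ⟨b - 1, by omega⟩
      have hp : ((b' + 1) + (r+1)).choose (b'+1)
          = (((b'+1)+r).choose b') + (((b'+1)+r).choose (b'+1)) := by
        rw [show (b'+1) + (r+1) = ((b'+1)+r)+1 by omega]
        exact Nat.choose_succ_succ ((b'+1)+r) b'
      rw [show b' + 1 - 1 = b' from rfl]
      push_cast [hp]
      ring


/-- In the range `v < b + t`, the relations force `μ` to be a multiple of the
binomial sequence. -/
lemma mu_eq_const (v b t : ℕ) (μ : ℕ → ℤ) (htb : t < b) (hbv : b ≤ v) (hvbt : v < b + t)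
    (hrel : ∀ s, s < t → ((v - s : ℕ) : ℤ) * μ (s + 1) = ((b - s : ℕ) : ℤ) * μ s) :
    ∀ s, s ≤ t → μ s
      = (∑ k ∈ Finset.range (v - b + 1), (-1:ℤ)^k * ((v-b).choose k : ℤ) * μ k)
          * ((v - s).choose (b - s) : ℤ) := by
  set K : ℕ → ℤ := fun s => ((v - s).choose (b - s) : ℤ) with hK
  set a : ℤ := ∑ k ∈ Finset.range (v - b + 1), (-1:ℤ)^k * ((v-b).choose k : ℤ) * μ k with ha
  have hKrec : ∀ s, s < t → ((v - s : ℕ) : ℤ) * K (s+1) = ((b - s : ℕ) : ℤ) * K s := by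
    intro s hs
    obtain ⟨p, hp⟩ : ∃ p, v - s = p + 1 := ⟨v - s - 1, by omega⟩
    obtain ⟨q, hq⟩ : ∃ q, b - s = q + 1 := ⟨b - s - 1, by omega⟩
    have h3 : v - (s+1) = p := by omega
    have h4 : b - (s+1) = q := by omega
    have hnat : (p + 1) * Nat.choose p q = (q + 1) * Nat.choose (p+1) (q+1) := by
      have hsm := Nat.add_one_mul_choose_eq p q
      rw [hsm]
      ring
    show ((v - s : ℕ) : ℤ) * ((v - (s+1)).choose (b - (s+1)) : ℤ)
        = ((b - s : ℕ) : ℤ) * ((v - s).choose (b - s) : ℤ)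
    rw [h3, h4, hp, hq]
    exact_mod_cast hnat
  have hdown : ∀ j, j ≤ t → μ (t - j) * K t = μ t * K (t - j) := by
    intro j
    induction j with
    | zero => intro _; simp [mul_comm]
    | succ j ihj =>
        intro hj
        have ihj' := ihj (by omega)
        set s := t - (j+1) with hs
        have hst : s < t := by omega
        have hs1 : t - j = s + 1 := by omega
        rw [hs1] at ihj'
        have e1 := hrel s hst
        have e2 := hKrec s hst
        have hbs : ((b - s : ℕ) : ℤ) ≠ 0 := Int.natCast_ne_zero.mpr (by omega)
        apply mul_left_cancel₀ hbs
        linear_combination (-(K t)) * e1 + ((v - s : ℕ) : ℤ) * ihj' + μ t * e2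
  have hm : v - b ≤ t - 1 := by omega
  have hmb : v - b ≤ b := by omega
  have hsumK : ∑ k ∈ Finset.range (v - b + 1),
      (-1:ℤ)^k * ((v-b).choose k : ℤ) * K k = 1 := by
    calc ∑ k ∈ Finset.range (v - b + 1), (-1:ℤ)^k * ((v-b).choose k : ℤ) * K k
        = ∑ k ∈ Finset.range (v - b + 1),
            (-1:ℤ)^k * ((v-b).choose k : ℤ) * ((b + (v-b) + 0 - k).choose (b-k) : ℤ) := by
          refine Finset.sum_congr rfl fun k hk => ?_
          have he : b + (v - b) + 0 - k = v - k := by omega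
          rw [he]
      _ = ((b+0).choose b : ℤ) := altsum (v-b) b 0 hmb
      _ = 1 := by simp
  have hat : μ t = a * K t := by
    have expand : a * K t = ∑ k ∈ Finset.range (v - b + 1),
        (-1:ℤ)^k * ((v-b).choose k : ℤ) * μ k * K t := by
      rw [ha, Finset.sum_mul]
    have swap : ∀ k ∈ Finset.range (v - b + 1),
        (-1:ℤ)^k * ((v-b).choose k : ℤ) * μ k * K t
        = (-1:ℤ)^k * ((v-b).choose k : ℤ) * K k * μ t := by
      intro k hk
      rw [Finset.mem_range] at hk
      have hkt : k ≤ t := by omega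
      have := hdown (t - k) (by omega)
      rw [show t - (t - k) = k by omega] at this
      linear_combination ((-1:ℤ)^k * ((v-b).choose k : ℤ)) * this
    rw [expand, Finset.sum_congr rfl swap, ← Finset.sum_mul, hsumK, one_mul]
  have hfin : ∀ j, j ≤ t → μ (t - j) = a * K (t - j) := by
    intro j
    induction j with
    | zero => intro _; simpa using hat
    | succ j ihj =>
        intro hj
        have ihj' := ihj (by omega)
        set s := t - (j+1) with hs
        have hst : s < t := by omega
        have hs1 : t - j = s + 1 := by omega
        rw [hs1] at ihj'
        have e1 := hrel s hst
        have e2 := hKrec s hst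
        have hbs : ((b - s : ℕ) : ℤ) ≠ 0 := Int.natCast_ne_zero.mpr (by omega)
        apply mul_left_cancel₀ hbs
        linear_combination (-1 : ℤ) * e1 + ((v - s : ℕ) : ℤ) * ihj' + a * e2
  intro s hst
  have := hfin (t - s) (by omega)
  rw [show t - (t - s) = s by omega] at this
  exact this


end GJ

open GJ


/-- Graver–Jurkat. For integers `v ≥ 1`, `0 ≤ t < b ≤ v` and
`μ_0, …, μ_t ∈ ℤ`, there exists an integral `(v, μ_0, …, μ_t)`-design of block size `b`
(i.e. a function `c` from the `b`-element subsets of `{1,…,v}` to `ℤ` with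
`Σ_{X ⊇ Y, |X| = b} c X = μ_s` for every subset `Y` with `|Y| = s ≤ t`)
if and only if `(v − s) · μ_{s+1} = (b − s) · μ_s` for all `0 ≤ s < t`. -/
theorem integral_design_exists_iff (v b t : ℕ) (μ : ℕ → ℤ)
    (hv : 1 ≤ v) (htb : t < b) (hbv : b ≤ v) :
    (∃ c : Finset (Fin v) → ℤ, ∀ Y : Finset (Fin v), Y.card ≤ t →
        ∑ X ∈ univ.filter (fun X : Finset (Fin v) => X.card = b ∧ Y ⊆ X), c X = μ Y.card) ↔
      ∀ s < t, ((v - s : ℕ) : ℤ) * μ (s + 1) = ((b - s : ℕ) : ℤ) * μ s := by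
  classical
  have hVc : (univ : Finset (Fin v)).card = v := by simp
  have hconv : ∀ (Y : Finset (Fin v)) (c : Finset (Fin v) → ℤ),
      (∑ X ∈ univ.filter (fun X : Finset (Fin v) => X.card = b ∧ Y ⊆ X), c X)
        = incSum univ b c Y := by
    intro Y c
    refine Finset.sum_congr ?_ (fun _ _ => rfl)
    ext X
    simp [Finset.mem_powersetCard_univ, and_comm]
  constructor
  · rintro ⟨c, hc⟩ s hs
    have hmu : ∀ Z : Finset (Fin v), Z.card ≤ t → incSum univ b c Z = μ Z.card := by
      intro Z hZ
      rw [← hconv Z c]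
      exact hc Z hZ
    obtain ⟨Y, hYu, hYc⟩ := Finset.exists_subset_card_eq
      (show s ≤ (univ : Finset (Fin v)).card by omega)
    have hL : dSum univ (incSum univ b c) Y = ((v - s : ℕ) : ℤ) * μ (s+1) := by
      rw [dSum]
      have hterm : ∀ y ∈ univ \ Y, incSum univ b c (insert y Y) = μ (s+1) := by
        intro y hy
        have hyY : y ∉ Y := (Finset.mem_sdiff.mp hy).2
        have : (insert y Y).card = s + 1 := by
          rw [Finset.card_insert_of_notMem hyY, hYc]
        rw [hmu (insert y Y) (by omega), this]
      rw [Finset.sum_congr rfl hterm, Finset.sum_const, Finset.card_sdiff_of_subset hYu, hVc, hYc,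
        nsmul_eq_mul]
    have hR := dSum_incSum univ b c Y
    rw [hmu Y (by omega), hYc, hL] at hR
    rw [hR, Nat.cast_sub (by omega : s ≤ b)]
  · intro hrel
    by_cases hcase : b + t ≤ v
    · obtain ⟨c, hc⟩ := exists_design_of_le univ b t μ htb (by rw [hVc]; omega)
        (by rw [hVc]; exact hrel)
      refine ⟨c, fun Y hYt => ?_⟩
      rw [hconv Y c]
      exact hc Y (Finset.subset_univ Y) hYt
    · push_neg at hcase
      set a : ℤ := ∑ k ∈ Finset.range (v - b + 1), (-1:ℤ)^k * ((v-b).choose k : ℤ) * μ k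
        with ha
      refine ⟨fun _ => a, fun Y hYt => ?_⟩
      rw [hconv Y (fun _ => a)]
      have hcount := card_superset univ Y b (Finset.subset_univ Y) (by omega)
      rw [hVc] at hcount
      have : incSum univ b (fun _ => a) Y
          = a * ((v - Y.card).choose (b - Y.card) : ℤ) := by
        rw [incSum, Finset.sum_const, hcount, nsmul_eq_mul, mul_comm]
      rw [this]
      exact (mu_eq_const v b t μ htb hbv hcase hrel Y.card hYt).symm
end

section
/- Let 0 ≤ j ≤ t < b ≤ v be integers and let c be a p-ary t-design of block size b on {1,…,v} with coefficient μ_t. If C(b − j, t − j) ≢ 0 (mod p), then c is also a p-ary j-design, and its coefficient μ_j satisfies C(b − j, t − j)·μ_j = C(v − j, t − j)·μ_t in k (where binomial coefficients are interpreted via their images in k). -/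
/-! Double counting the pairs `T ⊆ X` with `Y ⊆ T`, `#T = t` and `X` a block: every block
`X ⊇ Y` contains `C(b - j, t - j)` such `T`, while each of the `C(v - j, t - j)` sets `T` of size
`t` containing `Y` contributes `μ_t`. Hence `C(b - j, t - j)` times the block sum at `Y` is
`C(v - j, t - j) · μ_t` for every `j`-set `Y`, and the first factor is a unit of `k`. -/

open Finset

section

variable {α : Type*} [DecidableEq α]

theorem card_filter_powerset_card_eq_and_superset {Y X : Finset α} (hYX : Y ⊆ X) {n : ℕ}
    (hn : #Y ≤ n) :
    #{T ∈ X.powerset | #T = n ∧ Y ⊆ T} = (#X - #Y).choose (n - #Y) := by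
  rw [← card_sdiff_of_subset hYX, ← card_powersetCard]
  refine card_nbij' (· \ Y) (· ∪ Y) ?_ ?_ ?_ ?_
  · intro T hT
    simp only [coe_filter, mem_powerset, Set.mem_ofPred_eq] at hT
    simp only [mem_coe, mem_powersetCard]
    exact ⟨sdiff_subset_sdiff hT.1 le_rfl, by rw [card_sdiff_of_subset hT.2.2, hT.2.1]⟩
  · intro S hS
    simp only [mem_coe, mem_powersetCard, subset_sdiff] at hS
    simp only [coe_filter, mem_powerset, Set.mem_ofPred_eq]
    refine ⟨union_subset hS.1.1 hYX, ?_, subset_union_right⟩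
    rw [card_union_of_disjoint hS.1.2, hS.2]
    omega
  · intro T hT
    simp only [coe_filter, mem_powerset, Set.mem_ofPred_eq] at hT
    exact sdiff_union_of_subset hT.2.2
  · intro S hS
    simp only [mem_coe, mem_powersetCard, subset_sdiff] at hS
    simp only [union_sdiff_right, sdiff_eq_self_of_disjoint hS.1.2]

end

section

variable {α M : Type*} [Fintype α] [DecidableEq α] [AddCommMonoid M]

def blockSum (c : Finset α → M) (b : ℕ) (Y : Finset α) : M :=
  ∑ X ∈ univ.filter (fun X : Finset α => #X = b ∧ Y ⊆ X), c X

def IsDesign (c : Finset α → M) (b t : ℕ) (μ : M) : Prop :=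
  ∀ T : Finset α, #T = t → blockSum c b T = μ

theorem sum_blockSum_superset (c : Finset α → M) (b : ℕ) {t : ℕ} {Y : Finset α} (hY : #Y ≤ t) :
    ∑ T ∈ univ.filter (fun T : Finset α => #T = t ∧ Y ⊆ T), blockSum c b T
      = (b - #Y).choose (t - #Y) • blockSum c b Y := by
  unfold blockSum
  rw [sum_comm' (t' := univ.filter (fun X : Finset α => #X = b ∧ Y ⊆ X))
    (s' := fun X => {T ∈ X.powerset | #T = t ∧ Y ⊆ T}) (by
      intro T X
      simp only [mem_filter, mem_univ, true_and, mem_powerset]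
      constructor
      · rintro ⟨⟨hT, hYT⟩, hX, hTX⟩; exact ⟨⟨hTX, hT, hYT⟩, hX, hYT.trans hTX⟩
      · rintro ⟨⟨hTX, hT, hYT⟩, hX, -⟩; exact ⟨⟨hT, hYT⟩, hX, hTX⟩), smul_sum]
  refine sum_congr rfl fun X hX => ?_
  obtain ⟨hXb, hYX⟩ := (mem_filter.mp hX).2
  rw [sum_const, card_filter_powerset_card_eq_and_superset hYX hY, hXb]

theorem IsDesign.choose_nsmul_blockSum {c : Finset α → M} {b t : ℕ} {μ : M}
    (hc : IsDesign c b t μ) {Y : Finset α} (hY : #Y ≤ t) :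
    (b - #Y).choose (t - #Y) • blockSum c b Y = (Fintype.card α - #Y).choose (t - #Y) • μ := by
  rw [← sum_blockSum_superset c b hY, sum_congr rfl fun T hT => hc T (mem_filter.mp hT).2.1,
    sum_const, ← powerset_univ, card_filter_powerset_card_eq_and_superset (subset_univ Y) hY,
    card_univ]

end

theorem pary_design_coeff_relation_general (p : ℕ)
    (k : Type*) [Field k] [CharP k p]
    (v b t j : ℕ) (hjt : j ≤ t)
    (c : Finset (Fin v) → k) (μt : k)
    (hc : ∀ Y : Finset (Fin v), Y.card = t →
        ∑ X ∈ univ.filter (fun X : Finset (Fin v) => X.card = b ∧ Y ⊆ X), c X = μt)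
    (hch : ¬ p ∣ Nat.choose (b - j) (t - j)) :
    ∃ μj : k,
      (∀ Y : Finset (Fin v), Y.card = j →
          ∑ X ∈ univ.filter (fun X : Finset (Fin v) => X.card = b ∧ Y ⊆ X), c X = μj) ∧
      (Nat.choose (b - j) (t - j) : k) * μj = (Nat.choose (v - j) (t - j) : k) * μt := by
  have hC : ((b - j).choose (t - j) : k) ≠ 0 := by rwa [Ne, CharP.cast_eq_zero_iff k p]
  refine ⟨(v - j).choose (t - j) * μt / (b - j).choose (t - j), fun Y hY => ?_, ?_⟩
  · have h := IsDesign.choose_nsmul_blockSum hc (hY ▸ hjt : #Y ≤ t)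
    rw [hY, Fintype.card_fin, nsmul_eq_mul, nsmul_eq_mul] at h
    rw [eq_div_iff hC, mul_comm]
    exact h
  · rw [mul_div_cancel₀ _ hC]

/-- Let `k` be a field of characteristic `p` and `0 ≤ j ≤ t < b ≤ v`.
If `c` is a `p`-ary `t`-design of block size `b` on `{1,…,v}` with coefficient `μ_t` and
`C(b − j, t − j) ≢ 0 (mod p)`, then `c` is also a `p`-ary `j`-design, with coefficient
`μ_j` satisfying `C(b − j, t − j) · μ_j = C(v − j, t − j) · μ_t` in `k`. -/
theorem pary_design_coeff_relation (p : ℕ) (hp : p.Prime)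
    (k : Type*) [Field k] [CharP k p]
    (v b t j : ℕ) (hjt : j ≤ t) (htb : t < b) (hbv : b ≤ v)
    (c : Finset (Fin v) → k) (μt : k)
    (hc : ∀ Y : Finset (Fin v), Y.card = t →
        ∑ X ∈ univ.filter (fun X : Finset (Fin v) => X.card = b ∧ Y ⊆ X), c X = μt)
    (hch : ¬ p ∣ Nat.choose (b - j) (t - j)) :
    ∃ μj : k,
      (∀ Y : Finset (Fin v), Y.card = j →
          ∑ X ∈ univ.filter (fun X : Finset (Fin v) => X.card = b ∧ Y ⊆ X), c X = μj) ∧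
      (Nat.choose (b - j) (t - j) : k) * μj = (Nat.choose (v - j) (t - j) : k) * μt :=
  pary_design_coeff_relation_general p k v b t j hjt c μt hc hch
end

section
/- Let a ≥ b ≥ 1 be integers and let c be a function from the b-element subsets of {1,…,a+b} to k. Then c is a universal design for (a,b) if and only if c is a (b − p^l)-design for every integer 0 ≤ l ≤ l_p(b), where l_p(b) = ⌊log_p b⌋. -/
open Finset

lemma lucas_nonzero (p : ℕ) (hp : p.Prime) (n : ℕ) (hn : 0 < n) :
    ¬ p ∣ n.choose (p ^ Nat.log p n) := by
  haveI : Fact p.Prime := ⟨hp⟩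
  set l := Nat.log p n with hl
  have hple : p ^ l ≤ n := Nat.pow_log_le_self p hn.ne'
  have hlt : n < p ^ (l + 1) := Nat.lt_pow_succ_log_self hp.one_lt n
  have hmod := Choose.choose_modEq_choose_mul_prod_range_choose (p := p) (n := n) (k := p ^ l) l
  have hdiv : p ^ l / p ^ l = 1 := Nat.div_self (pow_pos hp.pos l)
  have hprod : ∏ i ∈ Finset.range l, ((n / p ^ i % p).choose (p ^ l / p ^ i % p)) = 1 := by
    apply Finset.prod_eq_one
    intro i hi
    rw [Finset.mem_range] at hi
    have h1 : p ^ l / p ^ i = p ^ (l - i) := Nat.pow_div hi.le hp.pos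
    have h2 : p ∣ p ^ (l - i) := dvd_pow_self p (by omega)
    rw [h1, Nat.mod_eq_zero_of_dvd h2, Nat.choose_zero_right]
  rw [hdiv, hprod, Nat.choose_one_right] at hmod
  simp only [Nat.cast_one, mul_one] at hmod
  -- hmod : n.choose (p^l) ≡ n / p^l [ZMOD p]
  have hcast : ((n.choose (p ^ l) : ℕ) : ZMod p) = ((n / p ^ l : ℕ) : ZMod p) := by
    have := (ZMod.intCast_eq_intCast_iff _ _ _).mpr hmod
    exact_mod_cast this
  intro hdvd
  rw [← ZMod.natCast_eq_zero_iff] at hdvd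
  rw [hdvd] at hcast
  have h1 : 1 ≤ n / p ^ l := (Nat.one_le_div_iff (pow_pos hp.pos l)).mpr hple
  have h2 : n / p ^ l < p := by
    rw [Nat.div_lt_iff_lt_mul (pow_pos hp.pos l)]
    calc n < p ^ (l + 1) := hlt
    _ = p * p ^ l := by rw [pow_succ, mul_comm]
  have := (ZMod.natCast_eq_zero_iff (n / p ^ l) p).mp hcast.symm
  exact absurd this (Nat.not_dvd_of_pos_of_lt h1 h2)

lemma card_between {α : Type*} [DecidableEq α] [Fintype α] (Y X : Finset α) (hYX : Y ⊆ X)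
    (s : ℕ) (hs : Y.card ≤ s) :
    (univ.filter (fun Y' : Finset α => Y'.card = s ∧ Y ⊆ Y' ∧ Y' ⊆ X)).card
      = (X.card - Y.card).choose (s - Y.card) := by
  rw [← Finset.card_sdiff_of_subset hYX, ← Finset.card_powersetCard]
  apply Finset.card_bij' (fun Y' _ => Y' \ Y) (fun Z _ => Y ∪ Z)
  · intro Y' hY'
    simp only [Finset.mem_filter, Finset.mem_univ, true_and] at hY'
    obtain ⟨hcard, hYY', hY'X⟩ := hY'
    rw [Finset.mem_powersetCard]
    exact ⟨Finset.sdiff_subset_sdiff hY'X (le_refl Y),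
      by rw [Finset.card_sdiff_of_subset hYY', hcard]⟩
  · intro Z hZ
    rw [Finset.mem_powersetCard] at hZ
    obtain ⟨hZX, hZcard⟩ := hZ
    have hdisj : Disjoint Y Z := Finset.disjoint_right.mpr
      (fun x hx => (Finset.mem_sdiff.mp (hZX hx)).2)
    simp only [Finset.mem_filter, Finset.mem_univ, true_and]
    refine ⟨?_, Finset.subset_union_left, ?_⟩
    · rw [Finset.card_union_of_disjoint hdisj, hZcard]; omega
    · exact Finset.union_subset hYX (hZX.trans Finset.sdiff_subset)
  · intro Y' hY'
    simp only [Finset.mem_filter, Finset.mem_univ, true_and] at hY'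
    exact Finset.union_sdiff_of_subset hY'.2.1
  · intro Z hZ
    rw [Finset.mem_powersetCard] at hZ
    have hdisj : Disjoint Y Z := Finset.disjoint_right.mpr
      (fun x hx => (Finset.mem_sdiff.mp (hZ.1 hx)).2)
    exact Finset.union_sdiff_cancel_left hdisj

lemma swap_sum {α : Type*} [DecidableEq α] [Fintype α] {k : Type*} [Field k]
    (c : Finset α → k) (b s : ℕ) (Y : Finset α) (hts : Y.card ≤ s) :
    ∑ Y' ∈ univ.filter (fun Y' : Finset α => Y'.card = s ∧ Y ⊆ Y'),
      ∑ X ∈ univ.filter (fun X : Finset α => X.card = b ∧ Y' ⊆ X), c X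
    = ((b - Y.card).choose (s - Y.card) : k) *
        ∑ X ∈ univ.filter (fun X : Finset α => X.card = b ∧ Y ⊆ X), c X := by
  rw [Finset.sum_congr rfl (fun Y' _ => Finset.sum_filter
    (fun X : Finset α => X.card = b ∧ Y' ⊆ X) c), Finset.sum_comm,
    Finset.sum_filter (fun X : Finset α => X.card = b ∧ Y ⊆ X) c, Finset.mul_sum]
  apply Finset.sum_congr rfl
  intro X _
  by_cases hX : X.card = b ∧ Y ⊆ X
  · have hcount : (univ.filter (fun Y' : Finset α => Y'.card = s ∧ Y ⊆ Y')).filter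
        (fun Y' => X.card = b ∧ Y' ⊆ X)
        = univ.filter (fun Y' : Finset α => Y'.card = s ∧ Y ⊆ Y' ∧ Y' ⊆ X) := by
      rw [Finset.filter_filter]
      apply Finset.filter_congr
      intro Y' _
      simp only [hX.1, true_and]
      tauto
    calc ∑ Y' ∈ (univ.filter (fun Y' : Finset α => Y'.card = s ∧ Y ⊆ Y')),
          (if X.card = b ∧ Y' ⊆ X then c X else 0)
        = ∑ Y' ∈ (univ.filter (fun Y' : Finset α => Y'.card = s ∧ Y ⊆ Y')).filter
            (fun Y' => X.card = b ∧ Y' ⊆ X), c X := (Finset.sum_filter _ _).symm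
      _ = ((b - Y.card).choose (s - Y.card) : k) * c X := by
          rw [Finset.sum_const, hcount, card_between Y X hX.2 s hts, hX.1, nsmul_eq_mul]
      _ = _ := by rw [if_pos hX]
  · rw [if_neg hX, mul_zero]
    apply Finset.sum_eq_zero
    intro Y' hY'
    simp only [Finset.mem_filter, Finset.mem_univ, true_and] at hY'
    rw [if_neg]
    intro ⟨hb, hY'X⟩
    exact hX ⟨hb, hY'.2.trans hY'X⟩

/-- Let `k` be a field of characteristic `p` and `a ≥ b ≥ 1`.
A design `c` of block size `b` on `{1,…,a+b}` is universal (a `t`-design for every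
`t < b`) if and only if it is a `(b − p^l)`-design for every `0 ≤ l ≤ l_p(b)`,
where `l_p(b) = ⌊log_p b⌋`. -/
theorem universal_iff_b_sub_ppow_designs (p : ℕ) (hp : p.Prime)
    (k : Type*) [Field k] [CharP k p]
    (a b : ℕ) (hb : 1 ≤ b) (hab : b ≤ a)
    (c : Finset (Fin (a + b)) → k) :
    (∀ t < b, ∃ μ : k, ∀ Y : Finset (Fin (a + b)), Y.card = t →
        ∑ X ∈ univ.filter (fun X : Finset (Fin (a + b)) => X.card = b ∧ Y ⊆ X), c X = μ) ↔
      (∀ l ≤ Nat.log p b, ∃ μ : k, ∀ Y : Finset (Fin (a + b)), Y.card = b - p ^ l →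
        ∑ X ∈ univ.filter (fun X : Finset (Fin (a + b)) => X.card = b ∧ Y ⊆ X), c X = μ) := by
  constructor
  · intro H l _
    exact H (b - p ^ l) (Nat.sub_lt hb (pow_pos hp.pos l))
  · intro H t ht
    have hn0 : 0 < b - t := by omega
    set l := Nat.log p (b - t) with hl
    have hl_le : l ≤ Nat.log p b := Nat.log_mono_right (Nat.sub_le b t)
    obtain ⟨μ, hμ⟩ := H l hl_le
    have hple : p ^ l ≤ b - t := Nat.pow_log_le_self p hn0.ne'
    set s := b - p ^ l with hs
    have hts : t ≤ s := by omega
    have hst : s - t = (b - t) - p ^ l := by omega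
    have hchoose : (b - t).choose (s - t) = (b - t).choose (p ^ l) := by
      rw [hst, Nat.choose_symm hple]
    have hD : ((b - t).choose (s - t) : k) ≠ 0 := by
      rw [hchoose, Ne, CharP.cast_eq_zero_iff k p]
      exact lucas_nonzero p hp (b - t) hn0
    refine ⟨(((b - t).choose (s - t) : k))⁻¹ *
      (((a + b - t).choose (s - t) : k) * μ), ?_⟩
    intro Y hY
    have hswap := swap_sum c b s Y (by rw [hY]; exact hts)
    rw [hY] at hswap
    have hcardA : (univ.filter (fun Y' : Finset (Fin (a + b)) => Y'.card = s ∧ Y ⊆ Y')).card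
        = (a + b - t).choose (s - t) := by
      have h1 : (univ.filter (fun Y' : Finset (Fin (a + b)) => Y'.card = s ∧ Y ⊆ Y'))
          = (univ.filter (fun Y' : Finset (Fin (a + b)) =>
              Y'.card = s ∧ Y ⊆ Y' ∧ Y' ⊆ univ)) := by
        apply Finset.filter_congr
        intro Y' _
        simp [Finset.subset_univ]
      rw [h1, card_between Y univ (Finset.subset_univ Y) s (by rw [hY]; exact hts),
        Finset.card_univ, Fintype.card_fin, hY]
    have hsum : ∑ Y' ∈ univ.filter (fun Y' : Finset (Fin (a + b)) => Y'.card = s ∧ Y ⊆ Y'),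
        ∑ X ∈ univ.filter (fun X : Finset (Fin (a + b)) => X.card = b ∧ Y' ⊆ X), c X
        = ((a + b - t).choose (s - t)) • μ := by
      rw [Finset.sum_congr rfl (fun Y' hY' => by
        simp only [Finset.mem_filter] at hY'
        exact hμ Y' hY'.2.1), Finset.sum_const, hcardA]
    have hkey : ((b - t).choose (s - t) : k) *
        (∑ X ∈ univ.filter (fun X : Finset (Fin (a + b)) => X.card = b ∧ Y ⊆ X), c X)
        = ((a + b - t).choose (s - t) : k) * μ := by
      rw [← hswap, hsum, nsmul_eq_mul]
    rw [← hkey, inv_mul_cancel_left₀ hD]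
end

section
/- Let a ≥ b ≥ 1 be integers and let u be a universal p-ary design for (a,b) with coefficient sequence (μ_0,…,μ_{b−1}). If μ_j ≠ 0 for some 0 ≤ j < b, then (b − j)_m + a_m < p for every 0 ≤ m < l_p(b), where n_m denotes the m-th digit of n in base p and l_p(b) = ⌊log_p b⌋. -/
/-!
Counting the chains `Y₀ ⊆ Y ⊆ X` with `#Y₀ = s`, `#Y = s + r`, `#X = b` shows that the
coefficients of a universal design on `v` points satisfy `C(v - s, r) μ (s + r) = C(b - s, r) μ s`.
By Lucas' theorem, for a digit `d < p`, `p ∣ C(x, d p^m)` iff the `m`-th digit of `x` is `< d`.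

Let `m` be the first position where adding the digits of `n = b - j` and `a` carries, and `d` the
`m`-th digit of `n`. If `n ≠ d p^m`, take `s = j`, `r = d p^m`: the carry lowers the `m`-th digit of
`a + n` below `d`, so `p ∣ C(a + n, r)` but `p ∤ C(n, r)`, forcing `μ j = 0`. If `n = d p^m`, take
`r = (p - d) p^m` and `s = j - r` (possible as `p^(m+1) ≤ b`): then `b - s = p^(m+1)`, so
`p ∣ C(b - s, r)`, while the `m`-th digit of `a + p^(m+1)` is `≥ p - d`, so `p ∤ C(a + b - s, r)`,
again forcing `μ j = 0`.
-/

open Finset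

theorem Nat.choose_mul_pow_modEq_choose_digit {p : ℕ} [Fact p.Prime] {d : ℕ} (hd : d < p)
    (x m : ℕ) : x.choose (d * p ^ m) ≡ (x / p ^ m % p).choose d [MOD p] := by
  induction m generalizing x with
  | zero =>
    simpa [Nat.mod_eq_of_lt hd, Nat.div_eq_of_lt hd] using
      Choose.choose_modEq_choose_mod_mul_choose_div_nat (n := x) (k := d) (p := p)
  | succ m ih =>
    have hp : 0 < p := (Fact.out : p.Prime).pos
    calc x.choose (d * p ^ (m + 1))
        ≡ (x % p).choose (d * p ^ (m + 1) % p) * (x / p).choose (d * p ^ (m + 1) / p) [MOD p] :=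
          Choose.choose_modEq_choose_mod_mul_choose_div_nat
      _ = (x / p).choose (d * p ^ m) := by
          rw [pow_succ, ← mul_assoc, Nat.mul_mod_left, Nat.mul_div_cancel _ hp,
            Nat.choose_zero_right, one_mul]
      _ ≡ (x / p ^ (m + 1) % p).choose d [MOD p] := by
          rw [pow_succ', ← Nat.div_div_eq_div_mul]
          exact ih (x / p)

theorem Nat.Prime.dvd_choose_mul_pow_iff {p : ℕ} (hp : p.Prime) {d : ℕ} (hd : d < p) (x m : ℕ) :
    p ∣ x.choose (d * p ^ m) ↔ x / p ^ m % p < d := by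
  have := Fact.mk hp
  rw [(Nat.choose_mul_pow_modEq_choose_digit hd x m).dvd_iff dvd_rfl]
  constructor
  · intro hdvd
    by_contra! hle
    exact hp.one_lt.ne' <|
      (hp.coprime_choose_of_lt (Nat.mod_lt _ hp.pos) hle).eq_one_of_dvd hdvd
  · intro hlt
    rw [Nat.choose_eq_zero_of_lt hlt]
    exact dvd_zero p

theorem Nat.mod_pow_add_mod_pow_lt {p m x y : ℕ}
    (h : ∀ i < m, x / p ^ i % p + y / p ^ i % p < p) : x % p ^ m + y % p ^ m < p ^ m := by
  induction m with
  | zero => simp [Nat.mod_one]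
  | succ m ih =>
    have hm : x / p ^ m % p + y / p ^ m % p + 1 ≤ p := h m m.lt_succ_self
    have hlow := ih fun i hi => h i (hi.trans m.lt_succ_self)
    calc x % p ^ (m + 1) + y % p ^ (m + 1)
        = x % p ^ m + y % p ^ m + p ^ m * (x / p ^ m % p + y / p ^ m % p) := by
          rw [Nat.mod_pow_succ, Nat.mod_pow_succ]; ring
      _ < p ^ m * (x / p ^ m % p + y / p ^ m % p + 1) := by nlinarith
      _ ≤ p ^ (m + 1) := by rw [pow_succ]; exact Nat.mul_le_mul_left _ hm

theorem Nat.Prime.dvd_choose_add_digit_mul_pow {p : ℕ} (hp : p.Prime) {x y m : ℕ}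
    (hlow : ∀ i < m, x / p ^ i % p + y / p ^ i % p < p)
    (hcarry : p ≤ x / p ^ m % p + y / p ^ m % p) :
    p ∣ (x + y).choose (x / p ^ m % p * p ^ m) := by
  have hx := Nat.mod_lt (x / p ^ m) hp.pos
  have hy := Nat.mod_lt (y / p ^ m) hp.pos
  rw [hp.dvd_choose_mul_pow_iff hx, Nat.add_div_eq_of_add_mod_lt (Nat.mod_pow_add_mod_pow_lt hlow),
    Nat.add_mod, Nat.mod_eq_sub_mod hcarry, Nat.mod_eq_of_lt (by omega)]
  omega

theorem Nat.Prime.dvd_choose_pow_succ {p : ℕ} (hp : p.Prime) {d : ℕ} (hd₀ : 0 < d) (hd : d < p)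
    (m : ℕ) : p ∣ (p ^ (m + 1)).choose ((p - d) * p ^ m) := by
  rw [hp.dvd_choose_mul_pow_iff (by omega), pow_succ, Nat.mul_div_cancel_left _ (pow_pos hp.pos m),
    Nat.mod_self]
  omega

theorem Nat.Prime.not_dvd_choose_add_pow_succ {p : ℕ} (hp : p.Prime) {d y m : ℕ} (hd : d < p)
    (hcarry : p ≤ d + y / p ^ m % p) : ¬ p ∣ (y + p ^ (m + 1)).choose ((p - d) * p ^ m) := by
  have hy := Nat.mod_lt (y / p ^ m) hp.pos
  rw [hp.dvd_choose_mul_pow_iff (by omega), pow_succ, Nat.add_mul_div_left _ _ (pow_pos hp.pos m),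
    Nat.add_mod_right]
  omega

section Design

variable {α k : Type*} [Fintype α] [DecidableEq α]

def IsUniversalDesign [AddCommMonoid k] (b : ℕ) (μ : ℕ → k) (u : Finset α → k) : Prop :=
  ∀ t < b, ∀ Y : Finset α, Y.card = t →
    ∑ X ∈ univ.filter (fun X : Finset α => X.card = b ∧ Y ⊆ X), u X = μ t

variable {b : ℕ} {μ : ℕ → k} {u : Finset α → k}

theorem IsUniversalDesign.choose_mul_coeff_add [CommSemiring k] (hu : IsUniversalDesign b μ u)
    {s r : ℕ} (hsr : s + r < b) (hs : s ≤ Fintype.card α) :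
    ((Fintype.card α - s).choose r : k) * μ (s + r) = ((b - s).choose r : k) * μ s := by
  obtain ⟨Y₀, -, hY₀⟩ := exists_subset_card_eq (s := (univ : Finset α)) (by simpa using hs)
  have hcount (Z : Finset α) (hZ : Y₀ ⊆ Z) :
      #{Y ∈ Z.powersetCard (s + r) | Y₀ ⊆ Y} = (#Z - s).choose r := by
    rw [card_filter_powersetCard_subset _ _ _ hZ (by omega), hY₀, Nat.add_sub_cancel_left]
  calc ((Fintype.card α - s).choose r : k) * μ (s + r)
      = ∑ Y ∈ univ.powersetCard (s + r) with Y₀ ⊆ Y, μ (s + r) := by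
        rw [sum_const, nsmul_eq_mul, hcount univ (subset_univ _), card_univ]
    _ = ∑ Y ∈ univ.powersetCard (s + r) with Y₀ ⊆ Y,
          ∑ X ∈ univ.filter (fun X : Finset α => X.card = b ∧ Y ⊆ X), u X := by
        refine sum_congr rfl fun Y hY => (hu _ hsr Y ?_).symm
        exact mem_powersetCard_univ.mp (mem_filter.mp hY).1
    _ = ∑ X ∈ univ.filter (fun X : Finset α => X.card = b ∧ Y₀ ⊆ X),
          ∑ Y ∈ X.powersetCard (s + r) with Y₀ ⊆ Y, u X := by
        refine sum_comm' fun Y X => ?_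
        simp only [mem_filter, mem_powersetCard, mem_univ, subset_univ, true_and]
        exact ⟨fun ⟨⟨hYc, hY₀Y⟩, hXb, hYX⟩ => ⟨⟨⟨hYX, hYc⟩, hY₀Y⟩, hXb, hY₀Y.trans hYX⟩,
          fun ⟨⟨⟨hYX, hYc⟩, hY₀Y⟩, hXb, _⟩ => ⟨⟨hYc, hY₀Y⟩, hXb, hYX⟩⟩
    _ = ((b - s).choose r : k) * μ s := by
        rw [← hu s (by omega) Y₀ hY₀, mul_sum]
        refine sum_congr rfl fun X hX => ?_
        obtain ⟨hXb, hY₀X⟩ := (mem_filter.mp hX).2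
        rw [sum_const, nsmul_eq_mul, hcount X hY₀X, hXb]

variable {p : ℕ} [CommRing k] [NoZeroDivisors k] [CharP k p]

theorem IsUniversalDesign.coeff_eq_zero_of_dvd_choose (hu : IsUniversalDesign b μ u)
    {s r : ℕ} (hsr : s + r < b) (hs : s ≤ Fintype.card α)
    (hdvd : p ∣ (Fintype.card α - s).choose r) (hndvd : ¬ p ∣ (b - s).choose r) : μ s = 0 := by
  have h := hu.choose_mul_coeff_add hsr hs
  rw [(CharP.cast_eq_zero_iff k p _).mpr hdvd, zero_mul] at h
  exact (mul_eq_zero.mp h.symm).resolve_left (mt (CharP.cast_eq_zero_iff k p _).mp hndvd)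

theorem IsUniversalDesign.coeff_add_eq_zero_of_dvd_choose (hu : IsUniversalDesign b μ u)
    {s r : ℕ} (hsr : s + r < b) (hs : s ≤ Fintype.card α)
    (hdvd : p ∣ (b - s).choose r) (hndvd : ¬ p ∣ (Fintype.card α - s).choose r) :
    μ (s + r) = 0 := by
  have h := hu.choose_mul_coeff_add hsr hs
  rw [(CharP.cast_eq_zero_iff k p _).mpr hdvd, zero_mul] at h
  exact (mul_eq_zero.mp h).resolve_left (mt (CharP.cast_eq_zero_iff k p _).mp hndvd)

theorem IsUniversalDesign.coeff_eq_zero_of_digit_carry (hu : IsUniversalDesign b μ u)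
    (hp : p.Prime) {a j m : ℕ} (hv : Fintype.card α = a + b) (hj : j < b)
    (hpow : p ^ (m + 1) ≤ b) (hlow : ∀ i < m, (b - j) / p ^ i % p + a / p ^ i % p < p)
    (hcarry : p ≤ (b - j) / p ^ m % p + a / p ^ m % p) : μ j = 0 := by
  generalize hn : b - j = n at hlow hcarry
  have hd : n / p ^ m % p < p := Nat.mod_lt _ hp.pos
  have ha : a / p ^ m % p < p := Nat.mod_lt _ hp.pos
  have hdn : n / p ^ m % p * p ^ m ≤ n := calc
    _ ≤ n % p ^ (m + 1) := by rw [Nat.mod_pow_succ, mul_comm]; exact Nat.le_add_left _ _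
    _ ≤ n := Nat.mod_le _ _
  rcases hdn.lt_or_eq with hlt | heq
  · refine hu.coeff_eq_zero_of_dvd_choose (s := j) (r := n / p ^ m % p * p ^ m) (by omega)
      (by omega) ?_ ?_
    · rw [hv, show a + b - j = n + a by omega]
      exact hp.dvd_choose_add_digit_mul_pow hlow hcarry
    · rw [hn, hp.dvd_choose_mul_pow_iff hd]
      exact lt_irrefl _
  · -- `n` is its `m`-th digit times `p ^ m`; pad it up to `p ^ (m + 1)`
    have hcomp : n + (p - n / p ^ m % p) * p ^ m = p ^ (m + 1) := by
      nth_rw 1 [← heq]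
      rw [← Nat.add_mul, Nat.add_sub_cancel' hd.le, pow_succ']
    have h := hu.coeff_add_eq_zero_of_dvd_choose (s := j - (p - n / p ^ m % p) * p ^ m)
      (r := (p - n / p ^ m % p) * p ^ m) (by omega) (by omega) ?_ ?_
    · rwa [Nat.sub_add_cancel (by omega)] at h
    · rw [show b - (j - (p - n / p ^ m % p) * p ^ m) = p ^ (m + 1) by omega]
      exact hp.dvd_choose_pow_succ (by omega) hd m
    · rw [hv, show a + b - (j - (p - n / p ^ m % p) * p ^ m) = a + p ^ (m + 1) by omega]
      exact hp.not_dvd_choose_add_pow_succ hd (by omega)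

end Design

theorem nonnull_coeff_digit_condition_general (p : ℕ) (hp : p.Prime)
    (k : Type*) [Field k] [CharP k p]
    (a b : ℕ)
    (u : Finset (Fin (a + b)) → k) (μ : ℕ → k)
    (hu : ∀ t < b, ∀ Y : Finset (Fin (a + b)), Y.card = t →
        ∑ X ∈ univ.filter (fun X : Finset (Fin (a + b)) => X.card = b ∧ Y ⊆ X), u X = μ t)
    (j : ℕ) (hj : j < b) (hμ : μ j ≠ 0) :
    ∀ m < Nat.log p b, (b - j) / p ^ m % p + a / p ^ m % p < p := by
  intro m
  induction m using Nat.strong_induction_on with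
  | _ m ih =>
  intro hm
  by_contra! hcarry
  have hpow : p ^ (m + 1) ≤ b :=
    (Nat.pow_le_pow_right hp.pos hm).trans (Nat.pow_log_le_self p (by omega))
  exact hμ (IsUniversalDesign.coeff_eq_zero_of_digit_carry hu hp (Fintype.card_fin _) hj hpow
    (fun i hi => ih i hi (hi.trans hm)) hcarry)

/-- Let `k` be a field of characteristic `p`, `a ≥ b ≥ 1`, and let `u`
be a universal `p`-ary design for `(a,b)` with coefficient sequence `μ_0, …, μ_{b−1}`.
If `μ_j ≠ 0` for some `j < b`, then `(b − j)_m + a_m < p` for every `m < l_p(b)`,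
where `n_m` denotes the `m`-th base-`p` digit of `n`. -/
theorem nonnull_coeff_digit_condition (p : ℕ) (hp : p.Prime)
    (k : Type*) [Field k] [CharP k p]
    (a b : ℕ) (hb : 1 ≤ b) (hab : b ≤ a)
    (u : Finset (Fin (a + b)) → k) (μ : ℕ → k)
    (hu : ∀ t < b, ∀ Y : Finset (Fin (a + b)), Y.card = t →
        ∑ X ∈ univ.filter (fun X : Finset (Fin (a + b)) => X.card = b ∧ Y ⊆ X), u X = μ t)
    (j : ℕ) (hj : j < b) (hμ : μ j ≠ 0) :
    ∀ m < Nat.log p b, (b - j) / p ^ m % p + a / p ^ m % p < p :=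
  nonnull_coeff_digit_condition_general p hp k a b u μ hu j hj hμ
end

section
/- Let p be a prime and a ≥ b ≥ 1 integers. If the pair (a,b) is James, then the comparability graph on X(a,b) is connected. -/
/-!
If `p ^ L ∣ a + 1` then the lowest `L` base-`p` digits of `a` all equal `p - 1`, so the digit
condition defining `X(a,b)` says exactly that the lowest `L` digits of `b - j` vanish, i.e.
`p ^ L ∣ b - j`, where `L = l_p(b)`. For `j < i` in `X(a,b)` we can then write
`b - j = p ^ L * k` and `i - j = p ^ L * d` with `d ≤ k < p` (as `b < p ^ (L + 1)`), and Lucas's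
theorem gives `C(b - j, i - j) ≡ C(k, d) ≢ 0 (mod p)`. So `X(a,b)` is a clique, and it contains
`b - p ^ L`.
-/

open SimpleGraph

namespace Nat

theorem mod_eq_sub_one_of_dvd_add_one {n a : ℕ} (h : n ∣ a + 1) : a % n = n - 1 := by
  have h₁ := Nat.div_add_mod a n
  have h₂ := Nat.div_mul_cancel h
  rw [Nat.succ_div_of_dvd h, add_mul, one_mul, mul_comm] at h₂
  omega

theorem div_pow_mod_eq_sub_one_of_pow_dvd_add_one {p a L m : ℕ} (h : p ^ L ∣ a + 1)
    (hm : m < L) : a / p ^ m % p = p - 1 := by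
  have hm₁ : p ^ m * p ∣ a + 1 := (pow_succ p m ▸ pow_dvd_pow p hm).trans h
  apply mod_eq_sub_one_of_dvd_add_one
  rw [← Nat.succ_div_of_dvd (dvd_of_mul_right_dvd hm₁)]
  exact Nat.dvd_div_of_mul_dvd hm₁

theorem pow_dvd_iff_forall_div_pow_mod_eq_zero {p : ℕ} (hp : 0 < p) (n L : ℕ) :
    p ^ L ∣ n ↔ ∀ m < L, n / p ^ m % p = 0 := by
  induction L with
  | zero => simp
  | succ L ih =>
    rw [Nat.forall_lt_succ_right, ← ih, Nat.dvd_iff_mod_eq_zero, Nat.dvd_iff_mod_eq_zero,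
      Nat.mod_pow_succ, Nat.add_eq_zero_iff, mul_eq_zero]
    simp [hp.ne']

theorem Prime.not_dvd_choose_of_lt {p k d : ℕ} (hp : p.Prime) (hk : k < p) (hd : d ≤ k) :
    ¬ p ∣ k.choose d := by
  intro h
  have hfac : k.choose d ∣ k ! :=
    ⟨d ! * (k - d)!, by rw [← mul_assoc, Nat.choose_mul_factorial_mul_factorial hd]⟩
  exact absurd ((hp.dvd_factorial).1 (h.trans hfac)) (not_le.2 hk)

theorem Prime.not_dvd_choose_pow_mul {p k d : ℕ} (hp : p.Prime) (hk : k < p) (hd : d ≤ k)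
    (L : ℕ) : ¬ p ∣ (p ^ L * k).choose (p ^ L * d) := by
  have := Fact.mk hp
  rw [Choose.choose_pow_mul_pow_mul_modEq_choose_nat.dvd_iff dvd_rfl]
  exact hp.not_dvd_choose_of_lt hk hd

end Nat

theorem setOf_div_pow_mod_add_lt_eq {p a b L : ℕ} (hp : 0 < p) (h : p ^ L ∣ a + 1) :
    {j : ℕ | j < b ∧ ∀ m < L, (b - j) / p ^ m % p + a / p ^ m % p < p} =
      {j : ℕ | j < b ∧ p ^ L ∣ b - j} := by
  ext j
  simp only [Set.mem_ofPred_eq, Nat.pow_dvd_iff_forall_div_pow_mod_eq_zero hp]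
  refine and_congr_right fun _ => forall₂_congr fun m hm => ?_
  rw [Nat.div_pow_mod_eq_sub_one_of_pow_dvd_add_one h hm]
  omega

theorem not_dvd_choose_sub_of_pow_dvd_sub {p b i j L : ℕ} (hp : p.Prime)
    (hb : b < p ^ (L + 1)) (hi : i ≤ b) (hji : j ≤ i) (hbi : p ^ L ∣ b - i)
    (hbj : p ^ L ∣ b - j) : ¬ p ∣ (b - j).choose (i - j) := by
  have hij : i - j = (b - j) - (b - i) := by omega
  obtain ⟨k, hk⟩ := hbj
  obtain ⟨d, hd⟩ : p ^ L ∣ i - j := hij ▸ Nat.dvd_sub ⟨k, hk⟩ hbi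
  have hpL : 0 < p ^ L := pow_pos hp.pos L
  have hkp : k < p := by
    rw [pow_succ] at hb
    exact Nat.lt_of_mul_lt_mul_left (hk ▸ (Nat.sub_le b j).trans_lt hb)
  have hdk : d ≤ k := Nat.le_of_mul_le_mul_left (hd ▸ hk ▸ Nat.sub_le_sub_right hi j) hpL
  rw [hk, hd]
  exact hp.not_dvd_choose_pow_mul hkp hdk L

theorem isClique_fromRel_not_dvd_choose {p b L : ℕ} (hp : p.Prime) (hb : b < p ^ (L + 1)) :
    (fromRel fun i j : ℕ => j < i ∧ ¬ p ∣ (b - j).choose (i - j)).IsClique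
      {j : ℕ | j < b ∧ p ^ L ∣ b - j} := by
  rintro i ⟨hib, hbi⟩ j ⟨hjb, hbj⟩ hne
  refine (fromRel_adj _ _ _).2 ⟨hne, ?_⟩
  rcases hne.lt_or_gt with hij | hji
  · exact Or.inr ⟨hij, not_dvd_choose_sub_of_pow_dvd_sub hp hb hjb.le hij.le hbj hbi⟩
  · exact Or.inl ⟨hji, not_dvd_choose_sub_of_pow_dvd_sub hp hb hib.le hji.le hbi hbj⟩

theorem james_comparability_graph_connected_general (p : ℕ) (hp : p.Prime)
    (a b : ℕ) (hb : 1 ≤ b)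
    (hJames : p ^ Nat.log p b ∣ a + 1) :
    ((SimpleGraph.fromRel
        (fun i j : ℕ => j < i ∧ ¬ p ∣ Nat.choose (b - j) (i - j))).induce
      {j : ℕ | j < b ∧ ∀ m < Nat.log p b, (b - j) / p ^ m % p + a / p ^ m % p < p}).Connected := by
  rw [setOf_div_pow_mod_add_lt_eq hp.pos hJames,
    induce_eq_top.2
      (isClique_fromRel_not_dvd_choose hp (Nat.lt_pow_succ_log_self hp.one_lt b))]
  have hpow_le : p ^ Nat.log p b ≤ b := Nat.pow_log_le_self p (by omega)
  have hmem : b - p ^ Nat.log p b ∈ {j : ℕ | j < b ∧ p ^ Nat.log p b ∣ b - j} :=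
    ⟨Nat.sub_lt (by omega) (pow_pos hp.pos _), by rw [Nat.sub_sub_self hpow_le]⟩
  have : Nonempty {j : ℕ | j < b ∧ p ^ Nat.log p b ∣ b - j} := ⟨⟨_, hmem⟩⟩
  exact connected_top

/-- Let `p` be a prime and `a ≥ b ≥ 1` with `(a,b)` James (i.e.
`p^{l_p(b)} ∣ a + 1`).  Let `X(a,b) = { j | j < b ∧ ∀ m < l_p(b), (b−j)_m + a_m < p }`
(where `n_m` is the `m`-th base-`p` digit).  The comparability graph on `X(a,b)`,
joining `i > j` iff `C(b − j, i − j) ≢ 0 (mod p)`, is connected. -/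
theorem james_comparability_graph_connected (p : ℕ) (hp : p.Prime)
    (a b : ℕ) (hb : 1 ≤ b) (hab : b ≤ a)
    (hJames : p ^ Nat.log p b ∣ a + 1) :
    ((SimpleGraph.fromRel
        (fun i j : ℕ => j < i ∧ ¬ p ∣ Nat.choose (b - j) (i - j))).induce
      {j : ℕ | j < b ∧ ∀ m < Nat.log p b, (b - j) / p ^ m % p + a / p ^ m % p < p}).Connected :=
  james_comparability_graph_connected_general p hp a b hb hJames
end

section
/- Let p be a prime and a ≥ b ≥ 1 integers. If the pair (a,b) is neither James nor pointed, then the comparability graph on X(a,b) is connected. -/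
private lemma digit_pow_self' {p : ℕ} (hp : 2 ≤ p) (t m : ℕ) :
    p ^ t / p ^ m % p = if m = t then 1 else 0 := by
  rcases lt_trichotomy m t with h | h | h
  · rw [if_neg h.ne, Nat.pow_div h.le (by omega)]
    obtain ⟨k, hk⟩ : p ∣ p ^ (t - m) := dvd_pow_self p (by omega)
    rw [hk, Nat.mul_mod_right]
  · subst h
    rw [if_pos rfl, Nat.div_self (pow_pos (by omega) m)]
    exact Nat.one_mod_eq_one.mpr (by omega)
  · rw [if_neg (by omega), Nat.div_eq_of_lt (Nat.pow_lt_pow_right (by omega) h), Nat.zero_mod]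

private lemma digit_two_pows' {p s t : ℕ} (hp : 2 ≤ p) (hst : s < t) (m : ℕ) :
    (p ^ s + p ^ t) / p ^ m % p = if m = s ∨ m = t then 1 else 0 := by
  have hp0 : 0 < p ^ m := pow_pos (by omega) m
  rcases le_or_gt m s with hms | hms
  · have h1 : p ^ s = p ^ m * p ^ (s - m) := by rw [← pow_add]; congr 1; omega
    have h2 : p ^ t = p ^ m * p ^ (t - m) := by rw [← pow_add]; congr 1; omega
    rw [h1, h2, ← Nat.mul_add, Nat.mul_div_cancel_left _ hp0]
    rcases eq_or_lt_of_le hms with heq | hlt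
    · rw [if_pos (Or.inl heq)]
      obtain ⟨k, hk⟩ : p ∣ p ^ (t - m) := dvd_pow_self p (by omega)
      rw [show s - m = 0 by omega, pow_zero, hk, Nat.add_mul_mod_self_left]
      exact Nat.one_mod_eq_one.mpr (by omega)
    · rw [if_neg (by omega)]
      obtain ⟨k1, hk1⟩ : p ∣ p ^ (s - m) := dvd_pow_self p (by omega)
      obtain ⟨k2, hk2⟩ : p ∣ p ^ (t - m) := dvd_pow_self p (by omega)
      rw [hk1, hk2, ← Nat.mul_add, Nat.mul_mod_right]
  · rcases le_or_gt m t with hmt | hmt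
    · have h2 : p ^ t = p ^ m * p ^ (t - m) := by rw [← pow_add]; congr 1; omega
      rw [h2, Nat.add_mul_div_left _ _ hp0,
        Nat.div_eq_of_lt (Nat.pow_lt_pow_right (by omega) hms), Nat.zero_add]
      rcases eq_or_lt_of_le hmt with heq | hlt
      · rw [if_pos (Or.inr heq), show t - m = 0 by omega, pow_zero]
        exact Nat.one_mod_eq_one.mpr (by omega)
      · rw [if_neg (by omega)]
        obtain ⟨k, hk⟩ : p ∣ p ^ (t - m) := dvd_pow_self p (by omega)
        rw [hk, Nat.mul_mod_right]
    · rw [if_neg (by omega), Nat.div_eq_of_lt, Nat.zero_mod]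
      have h1 : p ^ s < p ^ t := Nat.pow_lt_pow_right (by omega) hst
      have h2 : p ^ t * 2 ≤ p ^ t * p := Nat.mul_le_mul_left _ hp
      have h3 : p ^ t * p = p ^ (t + 1) := (pow_succ p t).symm
      have h4 : p ^ (t + 1) ≤ p ^ m := Nat.pow_le_pow_right (by omega) hmt
      omega

private lemma choose_pow_not_dvd' {p : ℕ} (hp : p.Prime) :
    ∀ (t c : ℕ), 1 ≤ c / p ^ t % p → ¬ p ∣ Nat.choose c (p ^ t) := by
  haveI : Fact p.Prime := ⟨hp⟩
  have hp2 := hp.two_le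
  intro t
  induction t with
  | zero =>
    intro c h hdvd
    rw [pow_zero, Nat.choose_one_right] at hdvd
    rw [pow_zero, Nat.div_one] at h
    obtain ⟨k, rfl⟩ := hdvd
    rw [Nat.mul_mod_right] at h
    omega
  | succ t ih =>
    intro c h hdvd
    have step := Choose.choose_modEq_choose_mod_mul_choose_div_nat (p := p)
      (n := c) (k := p ^ (t + 1))
    have e1 : p ^ (t + 1) % p = 0 := by rw [pow_succ]; exact Nat.mul_mod_left _ _
    have e2 : p ^ (t + 1) / p = p ^ t := by
      rw [pow_succ']; exact Nat.mul_div_cancel_left _ (by omega)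
    rw [e1, e2, Nat.choose_zero_right, Nat.one_mul] at step
    have hc : 1 ≤ c / p / p ^ t % p := by
      rw [Nat.div_div_eq_div_mul, ← pow_succ']; exact h
    exact ih (c / p) hc
      (Nat.modEq_zero_iff_dvd.mp (step.symm.trans (Nat.modEq_zero_iff_dvd.mpr hdvd)))

private lemma digit_of_pred' {p m : ℕ} (hp : 2 ≤ p) :
    (p ^ (m + 1) - 1) / p ^ m = p - 1 := by
  have hpm : 0 < p ^ m := pow_pos (by omega) m
  have hps : p ^ (m + 1) = p ^ m * p := pow_succ p m
  have hle : p ^ m ≤ p ^ (m + 1) := Nat.pow_le_pow_right (by omega) (by omega)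
  have h1 : p ^ (m + 1) - 1 = p ^ m * (p - 1) + (p ^ m - 1) := by
    rw [Nat.mul_sub]; omega
  rw [h1, Nat.mul_add_div hpm, Nat.div_eq_of_lt (by omega)]
  omega

private lemma adigit_lo' {p a m : ℕ} (hp : 2 ≤ p) (hdvd : p ^ (m + 1) ∣ a + 1) :
    a / p ^ m % p = p - 1 := by
  obtain ⟨q, hq⟩ := hdvd
  have hq1 : 1 ≤ q := Nat.pos_of_ne_zero fun h => by simp [h] at hq
  have hN : 0 < p ^ (m + 1) := pow_pos (by omega) (m + 1)
  have hmod : a % p ^ (m + 1) = p ^ (m + 1) - 1 := by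
    have ha : a = p ^ (m + 1) * (q - 1) + (p ^ (m + 1) - 1) := by
      have hle : p ^ (m + 1) ≤ p ^ (m + 1) * q := Nat.le_mul_of_pos_right _ (by omega)
      rw [Nat.mul_sub]; omega
    rw [ha, Nat.mul_add_mod]
    exact Nat.mod_eq_of_lt (by omega)
  rw [← Nat.mod_mul_right_div_self, ← pow_succ, hmod]
  exact digit_of_pred' hp

private lemma adigit_nu' {p a ν : ℕ} (hp : 2 ≤ p) (h1 : p ^ ν ∣ a + 1)
    (h2 : ¬ p ^ (ν + 1) ∣ a + 1) : a / p ^ ν % p + 1 < p := by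
  obtain ⟨u, hu⟩ := h1
  have hu1 : 1 ≤ u := Nat.pos_of_ne_zero fun h => by simp [h] at hu
  have hpν : 0 < p ^ ν := pow_pos (by omega) ν
  have hdiv : a / p ^ ν = u - 1 := by
    have ha : a = p ^ ν * (u - 1) + (p ^ ν - 1) := by
      have hle : p ^ ν ≤ p ^ ν * u := Nat.le_mul_of_pos_right _ (by omega)
      rw [Nat.mul_sub]; omega
    rw [ha, Nat.mul_add_div hpν, Nat.div_eq_of_lt (by omega), Nat.add_zero]
  have hnd : ¬ p ∣ u := by
    intro hd
    exact h2 (by rw [hu, pow_succ]; exact Nat.mul_dvd_mul_left (p ^ ν) hd)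
  rw [hdiv]
  have hm : (u - 1) % p < p := Nat.mod_lt _ (by omega)
  rcases eq_or_lt_of_le (Nat.succ_le_of_lt hm) with heq | hlt
  · exfalso
    apply hnd
    apply Nat.dvd_of_mod_eq_zero
    conv_lhs => rw [show u = (u - 1) + 1 by omega]
    rw [Nat.add_mod, Nat.one_mod_eq_one.mpr (by omega),
      show (u - 1) % p + 1 = p from heq]
    exact Nat.mod_self p
  · exact hlt

/-- Let `p` be a prime and `a ≥ b ≥ 1` such that `(a,b)` is neither
James (`p^{l_p(b)} ∣ a + 1`) nor pointed (`b = p^β + b̂` with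
`b̂ < p^{ν_p(a+1)} < b`).  Then the comparability graph on
`X(a,b) = { j | j < b ∧ ∀ m < l_p(b), (b−j)_m + a_m < p }`,
joining `i > j` iff `C(b − j, i − j) ≢ 0 (mod p)`, is connected. -/
theorem not_james_not_pointed_comparability_graph_connected (p : ℕ) (hp : p.Prime)
    (a b : ℕ) (hb : 1 ≤ b) (hab : b ≤ a)
    (hNotJames : ¬ p ^ Nat.log p b ∣ a + 1)
    (hNotPointed : ¬ ∃ β bhat : ℕ, b = p ^ β + bhat ∧
        bhat < p ^ padicValNat p (a + 1) ∧ p ^ padicValNat p (a + 1) < b) :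
    ((SimpleGraph.fromRel
        (fun i j : ℕ => j < i ∧ ¬ p ∣ Nat.choose (b - j) (i - j))).induce
      {j : ℕ | j < b ∧ ∀ m < Nat.log p b, (b - j) / p ^ m % p + a / p ^ m % p < p}).Connected := by
  classical
  haveI : Fact p.Prime := ⟨hp⟩
  have hp2 : 2 ≤ p := hp.two_le
  set L := Nat.log p b with hLdef
  set ν := padicValNat p (a + 1) with hνdef
  set S : Set ℕ :=
    {j : ℕ | j < b ∧ ∀ m < L, (b - j) / p ^ m % p + a / p ^ m % p < p} with hSdef
  set G := (SimpleGraph.fromRel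
      (fun i j : ℕ => j < i ∧ ¬ p ∣ Nat.choose (b - j) (i - j))) with hGdef
  -- basic facts
  have hpν_dvd : p ^ ν ∣ a + 1 := pow_padicValNat_dvd
  have hpν_ndvd : ¬ p ^ (ν + 1) ∣ a + 1 := pow_succ_padicValNat_not_dvd (by omega)
  have hνL : ν < L := by
    by_contra h
    exact hNotJames ((pow_dvd_pow p (by omega)).trans hpν_dvd)
  have hpLb : p ^ L ≤ b := Nat.pow_log_le_self p (by omega)
  have hνb : p ^ ν < b := lt_of_lt_of_le (Nat.pow_lt_pow_right (by omega) hνL) hpLb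
  have hsum : p ^ L + p ^ ν ≤ b := by
    by_contra h
    exact hNotPointed ⟨L, b - p ^ L, by omega, by omega, hνb⟩
  have ha_lo : ∀ m, m < ν → a / p ^ m % p = p - 1 := fun m hm =>
    adigit_lo' hp2 ((pow_dvd_pow p (by omega)).trans hpν_dvd)
  have ha_ν : a / p ^ ν % p + 1 < p := adigit_nu' hp2 hpν_dvd hpν_ndvd
  have hadig : ∀ m, a / p ^ m % p < p := fun m => Nat.mod_lt _ (by omega)
  -- membership helper
  have mem_of : ∀ c : ℕ, 0 < c → c ≤ b →
      (∀ m, m < L → c / p ^ m % p + a / p ^ m % p < p) → (b - c) ∈ S := by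
    intro c h1 h2 h3
    refine ⟨by omega, fun m hm => ?_⟩
    rw [Nat.sub_sub_self h2]
    exact h3 m hm
  -- membership of p^ν
  have mem_ν : (b - p ^ ν) ∈ S := by
    refine mem_of _ (pow_pos (by omega) ν) (le_of_lt hνb) (fun m hm => ?_)
    rw [digit_pow_self' hp2 ν m]
    split
    · next h => subst h; omega
    · next h => have := hadig m; omega
  -- adjacency helper
  have adj_key : ∀ (j t : ℕ), j < b → p ^ t < b - j → 1 ≤ (b - j) / p ^ t % p →
      G.Adj (b - p ^ t) j := by
    intro j t hjb htc hd
    rw [hGdef, SimpleGraph.fromRel_adj]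
    refine ⟨by omega, Or.inl ⟨by omega, ?_⟩⟩
    rw [show b - p ^ t - j = (b - j) - p ^ t by omega, Nat.choose_symm (le_of_lt htc)]
    exact choose_pow_not_dvd' hp t (b - j) hd
  -- reachability helper
  have reach_key : ∀ (j t : ℕ) (hu : j ∈ S) (hv : b - p ^ t ∈ S),
      1 ≤ (b - j) / p ^ t % p →
      (G.induce S).Reachable ⟨j, hu⟩ ⟨b - p ^ t, hv⟩ := by
    intro j t hu hv hd
    have hjb : j < b := hu.1
    have hptc : p ^ t ≤ b - j := by
      have h1 : 1 ≤ (b - j) / p ^ t := le_trans hd (Nat.mod_le _ _)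
      exact (Nat.one_le_div_iff (pow_pos (by omega) t)).mp h1
    rcases eq_or_lt_of_le hptc with heq | hlt
    · have heq2 : (⟨j, hu⟩ : S) = ⟨b - p ^ t, hv⟩ :=
        Subtype.ext (show j = b - p ^ t by omega)
      rw [heq2]
    · exact (SimpleGraph.comap_adj.mpr ((adj_key j t hjb hlt hd).symm) :
        (G.induce S).Adj ⟨j, hu⟩ ⟨b - p ^ t, hv⟩).reachable
  -- every vertex reaches the vertex b - p^ν
  have reach0 : ∀ v : S, (G.induce S).Reachable v ⟨b - p ^ ν, mem_ν⟩ := by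
    rintro ⟨j, hj⟩
    have hjb : j < b := hj.1
    have hjd : ∀ m, m < L → (b - j) / p ^ m % p + a / p ^ m % p < p := fun m hm => hj.2 m hm
    set c := b - j with hcdef
    have hc1 : 1 ≤ c := by omega
    have hcb : c ≤ b := by omega
    set m := Nat.log p c with hmdef
    have hpmc : p ^ m ≤ c := Nat.pow_log_le_self p (by omega)
    have hclt : c < p ^ (m + 1) := Nat.lt_pow_succ_log_self (by omega) c
    have hcdiv : c / p ^ m < p := by
      rw [Nat.div_lt_iff_lt_mul (pow_pos (by omega) m)]
      calc c < p ^ (m + 1) := hclt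
        _ = p * p ^ m := pow_succ' p m
    have hd1 : 1 ≤ c / p ^ m % p := by
      rw [Nat.mod_eq_of_lt hcdiv]
      exact (Nat.one_le_div_iff (pow_pos (by omega) m)).mpr hpmc
    have hmL : m ≤ L := Nat.log_mono_right hcb
    -- membership of p^m
    have hm_cond : m < L → 1 + a / p ^ m % p < p := by
      intro hmL'
      have := hjd m hmL'
      omega
    have mem_m : (b - p ^ m) ∈ S := by
      refine mem_of _ (pow_pos (by omega) m) (le_trans hpmc hcb) (fun m' hm' => ?_)
      rw [digit_pow_self' hp2 m m']
      split
      · next h => subst h; exact hm_cond hm'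
      · next h => have := hadig m'; omega
    have r1 : (G.induce S).Reachable ⟨j, hj⟩ ⟨b - p ^ m, mem_m⟩ :=
      reach_key j m hj mem_m hd1
    rcases eq_or_ne m ν with hmν | hmν
    · have heq2 : (⟨b - p ^ m, mem_m⟩ : S) = ⟨b - p ^ ν, mem_ν⟩ :=
        Subtype.ext (show b - p ^ m = b - p ^ ν by rw [hmν])
      exact heq2 ▸ r1
    · -- show ν < m
      have hνm : ν < m := by
        rcases lt_or_gt_of_ne hmν with h | h
        · exfalso
          have h1 := ha_lo m h
          have h2 := hjd m (lt_trans h hνL)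
          omega
        · exact h
      -- vertex p^ν + p^m
      have hx_le : p ^ ν + p ^ m ≤ b := by
        rcases eq_or_lt_of_le hmL with heq | hlt
        · have hpe : p ^ m = p ^ L := by rw [heq]
          omega
        · have h1 : p ^ ν < p ^ m := Nat.pow_lt_pow_right (by omega) hνm
          have h2 : p ^ m * 2 ≤ p ^ m * p := Nat.mul_le_mul_left _ hp2
          have h3 : p ^ m * p = p ^ (m + 1) := (pow_succ p m).symm
          have h4 : p ^ (m + 1) ≤ p ^ L := Nat.pow_le_pow_right (by omega) hlt
          omega
      have mem_x : (b - (p ^ ν + p ^ m)) ∈ S := by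
        refine mem_of _ (by positivity) hx_le (fun m' hm' => ?_)
        rw [digit_two_pows' hp2 hνm m']
        split
        · next h =>
          rcases h with h | h
          · subst h; omega
          · subst h; exact hm_cond hm'
        · next h => have := hadig m'; omega
      have hxb : b - (b - (p ^ ν + p ^ m)) = p ^ ν + p ^ m := Nat.sub_sub_self hx_le
      have r2 : (G.induce S).Reachable ⟨b - (p ^ ν + p ^ m), mem_x⟩ ⟨b - p ^ m, mem_m⟩ := by
        refine reach_key _ m mem_x mem_m ?_
        rw [hxb, digit_two_pows' hp2 hνm m, if_pos (Or.inr rfl)]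
      have r3 : (G.induce S).Reachable ⟨b - (p ^ ν + p ^ m), mem_x⟩ ⟨b - p ^ ν, mem_ν⟩ := by
        refine reach_key _ ν mem_x mem_ν ?_
        rw [hxb, digit_two_pows' hp2 hνm ν, if_pos (Or.inl rfl)]
      exact (r1.trans r2.symm).trans r3
  rw [SimpleGraph.connected_iff]
  exact ⟨fun u v => (reach0 u).trans (reach0 v).symm, ⟨⟨b - p ^ ν, mem_ν⟩⟩⟩
end

section
/- Let a ≥ b ≥ 1 be integers such that the pair (a,b) is James, and let u and v be non-null universal p-ary designs for (a,b) with coefficient sequences (μ_0,…,μ_{b−1}) and (μ'_0,…,μ'_{b−1}) respectively. Then u and v are similar: there exists α ∈ k with μ_j = α·μ'_j for all 0 ≤ j < b. -/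
/-!
Double counting shows that the coefficients of a universal design for `(a, b)` satisfy the
linear relations `C(b - t, j) μ_t = C(a + b - t, j) μ_{t+j}` for `t + j < b`. Put
`q = p ^ l_p(b)`, so `q ≤ b < p q` and `q ∣ a + 1`. Lucas' theorem evaluates all binomial
coefficients that occur modulo `p`: if `q ∤ b - t`, a single relation forces `μ_t = 0`; along
`t = b - m q` the relation with `j = q` has left coefficient `m + 1 < p`, a unit, so
`μ_{b - (m+1) q}` is determined by `μ_{b - m q}`. Hence a solution vanishing at `b - q`
vanishes identically, the solution space is at most one-dimensional, and any two non-null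
solutions are proportional.
-/
open Finset

section Lucas

variable {p : ℕ} [Fact p.Prime] {R : Type*} [CommRing R] [CharP R p]

theorem Nat.cast_choose_eq_mod_pow_mul_div_pow (L n k : ℕ) :
    (n.choose k : R) =
      (n % p ^ L).choose (k % p ^ L) * (n / p ^ L).choose (k / p ^ L) := by
  have lucas (n k : ℕ) : (n.choose k : R) = (n % p).choose (k % p) * (n / p).choose (k / p) := by
    exact_mod_cast CharP.natCast_eq_natCast' R p Choose.choose_modEq_choose_mod_mul_choose_div_nat
  induction L generalizing n k with
  | zero => simp [Nat.mod_one]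
  | succ L ih =>
    rw [lucas n, ih (n / p), pow_succ', lucas (n % (p * p ^ L))]
    simp only [Nat.div_div_eq_div_mul, Nat.mod_mul_right_mod, Nat.mod_mul_right_div_self]
    ring

theorem Nat.cast_choose_mul_pow_add {L r s : ℕ} (hr : r < p ^ L) (hs : s < p ^ L) (A B : ℕ) :
    ((A * p ^ L + r).choose (B * p ^ L + s) : R) = A.choose B * r.choose s := by
  have hq : 0 < p ^ L := pow_pos (Fact.out : p.Prime).pos L
  have hdiv {C t : ℕ} (ht : t < p ^ L) : (C * p ^ L + t) / p ^ L = C := by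
    rw [add_comm, Nat.add_mul_div_right _ _ hq, Nat.div_eq_of_lt ht, zero_add]
  rw [Nat.cast_choose_eq_mod_pow_mul_div_pow (p := p) L, hdiv hr, hdiv hs,
    Nat.mul_add_mod_self_right]
  simp [Nat.add_mod, Nat.mod_eq_of_lt, hr, hs, mul_comm]

theorem Nat.cast_choose_mul_pow_add_of_lt {L r s : ℕ} (hr : r < p ^ L) (hs : s < p ^ L)
    (A : ℕ) :
    ((A * p ^ L + r).choose s : R) = r.choose s := by
  simpa using Nat.cast_choose_mul_pow_add (R := R) hr hs A 0

theorem Nat.cast_choose_prime_pow_sub_one {L s : ℕ} (hs : s < p ^ L) :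
    ((p ^ L - 1).choose s : R) = (-1) ^ s := by
  induction s with
  | zero => simp
  | succ s ih =>
    have hpascal := Nat.choose_succ_succ' (p ^ L - 1) s
    rw [Nat.sub_add_cancel (Nat.one_le_pow _ _ (Fact.out : p.Prime).pos)] at hpascal
    have hdvd : ((p ^ L).choose (s + 1) : R) = 0 :=
      (CharP.cast_eq_zero_iff R p _).mpr ((Fact.out : p.Prime).dvd_choose_pow s.succ_ne_zero hs.ne)
    rw [hpascal, Nat.cast_add, ih (by omega)] at hdvd
    rw [pow_succ]
    linear_combination hdvd

end Lucas

theorem sum_filter_superset_sum_filter_superset {α R : Type*} [Fintype α] [DecidableEq α]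
    [CommSemiring R] (u : Finset α → R) {Y : Finset α} {s : ℕ} (hYs : #Y ≤ s) (b : ℕ) :
    ∑ Z ∈ univ.filter (fun Z : Finset α => #Z = s ∧ Y ⊆ Z),
        ∑ X ∈ univ.filter (fun X : Finset α => #X = b ∧ Z ⊆ X), u X
      = (b - #Y).choose (s - #Y) *
          ∑ X ∈ univ.filter (fun X : Finset α => #X = b ∧ Y ⊆ X), u X := by
  rw [sum_comm' (s' := fun X => (X.powersetCard s).filter (Y ⊆ ·))
    (t' := univ.filter (fun X : Finset α => #X = b ∧ Y ⊆ X)), mul_sum]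
  · refine sum_congr rfl fun X hX => ?_
    obtain ⟨hXb, hYX⟩ := (mem_filter.1 hX).2
    rw [sum_const, card_filter_powersetCard_subset _ _ _ hYX hYs, hXb, nsmul_eq_mul]
  · intro Z X
    simp only [mem_filter, mem_univ, true_and, mem_powersetCard]
    constructor
    · rintro ⟨⟨hZs, hYZ⟩, hXb, hZX⟩
      exact ⟨⟨⟨hZX, hZs⟩, hYZ⟩, hXb, hYZ.trans hZX⟩
    · rintro ⟨⟨⟨hZX, hZs⟩, hYZ⟩, hXb, -⟩
      exact ⟨⟨hZs, hYZ⟩, hXb, hZX⟩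

theorem card_filter_card_eq_superset {α : Type*} [Fintype α] [DecidableEq α] {Y : Finset α}
    {s : ℕ} (hYs : #Y ≤ s) :
    #(univ.filter fun Z : Finset α => #Z = s ∧ Y ⊆ Z) =
      (Fintype.card α - #Y).choose (s - #Y) := by
  rw [← card_univ, ← card_filter_powersetCard_subset _ _ _ (subset_univ Y) hYs]
  congr 1
  ext Z
  simp [mem_powersetCard]

def designCoeffs (R : Type*) [CommSemiring R] (N b : ℕ) : Submodule R (ℕ → R) where
  carrier :=
    {w | ∀ t j, t + j < b → ((b - t).choose j : R) * w t = (N - t).choose j * w (t + j)}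
  add_mem' {v w} hv hw t j h := by simp only [Pi.add_apply, mul_add, hv t j h, hw t j h]
  zero_mem' := by simp
  smul_mem' c w hw t j h := by simp only [Pi.smul_apply, smul_eq_mul, mul_left_comm _ c, hw t j h]

theorem mem_designCoeffs {α R : Type*} [Fintype α] [DecidableEq α] [CommSemiring R]
    {b : ℕ} (hb : b ≤ Fintype.card α) {u : Finset α → R} {μ : ℕ → R}
    (hu : ∀ t < b, ∀ Y : Finset α, #Y = t →
        ∑ X ∈ univ.filter (fun X : Finset α => #X = b ∧ Y ⊆ X), u X = μ t) :
    μ ∈ designCoeffs R (Fintype.card α) b := by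
  intro t j htj
  obtain ⟨Y, -, rfl⟩ := exists_subset_card_eq (s := (univ : Finset α)) (n := t)
    (by rw [card_univ]; omega)
  have hsum := sum_filter_superset_sum_filter_superset u (Nat.le_add_right #Y j) b
  rwa [sum_congr rfl fun Z hZ => hu _ htj Z (mem_filter.1 hZ).2.1, sum_const, nsmul_eq_mul,
    card_filter_card_eq_superset (Nat.le_add_right #Y j), hu _ (by omega) Y rfl,
    Nat.add_sub_cancel_left, eq_comm] at hsum

section James

variable {p : ℕ} [Fact p.Prime] {R : Type*} [CommRing R] [IsDomain R] [CharP R p]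

theorem designCoeffs_apply_eq_zero_of_not_dvd {a b L t : ℕ} {w : ℕ → R}
    (hw : w ∈ designCoeffs R (a + b) b) (hJ : p ^ L ∣ a + 1) (hLb : p ^ L ≤ b) (ht : t < b)
    (hdvd : ¬ p ^ L ∣ b - t) : w t = 0 := by
  set q := p ^ L
  obtain ⟨c, hc⟩ := hJ
  have hq : 0 < q := pow_pos (Fact.out : p.Prime).pos L
  set m := (b - t) / q
  set r := (b - t) % q
  have hbt : b - t = m * q + r := (Nat.div_add_mod' (b - t) q).symm
  have hr : r < q := Nat.mod_lt _ hq
  have hr0 : r ≠ 0 := fun h => hdvd (Nat.dvd_of_mod_eq_zero h)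
  rw [mul_comm] at hc
  rcases Nat.eq_zero_or_pos m with hm | hm
  · -- relation from `b - q` to `t`: `C(q, q - r) = 0`, while `C(a + q, q - r) = ±1`
    rw [hm, zero_mul, zero_add] at hbt
    have h := hw (b - q) (q - r) (by omega)
    rw [show b - (b - q) = q by omega, show b - q + (q - r) = t by omega,
      show a + b - (b - q) = c * q + (q - 1) by omega,
      Nat.cast_choose_mul_pow_add_of_lt (by omega) (by omega),
      Nat.cast_choose_prime_pow_sub_one (by omega),
      (CharP.cast_eq_zero_iff R p _).mpr
        ((Fact.out : p.Prime).dvd_choose_pow (by omega) (by omega)),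
      zero_mul, eq_comm, mul_eq_zero] at h
    exact h.resolve_left (pow_ne_zero _ (neg_ne_zero.mpr one_ne_zero))
  · -- relation from `t` to `t + r`: `C(b - t, r) = 1`, while `C(a + b - t, r) = C(r - 1, r) = 0`
    have hmq : q ≤ m * q := Nat.le_mul_of_pos_left q hm
    have h := hw t r (by omega)
    rw [hbt, Nat.cast_choose_mul_pow_add_of_lt hr hr, Nat.choose_self,
      show a + b - t = (c + m) * q + (r - 1) by rw [add_mul]; omega,
      Nat.cast_choose_mul_pow_add_of_lt (by omega) hr, Nat.choose_eq_zero_of_lt (by omega)] at h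
    simpa using h

theorem designCoeffs_apply_sub_mul_eq_zero {N b L : ℕ} {w : ℕ → R}
    (hw : w ∈ designCoeffs R N b) (hbL : b < p ^ (L + 1)) (h0 : w (b - p ^ L) = 0) :
    ∀ m, 1 ≤ m → m * p ^ L ≤ b → w (b - m * p ^ L) = 0 := by
  set q := p ^ L
  have hq : 0 < q := pow_pos (Fact.out : p.Prime).pos L
  refine Nat.le_induction (fun _ => by simpa using h0) fun m hm ih hmb => ?_
  have hmq : q ≤ m * q := Nat.le_mul_of_pos_left q hm
  have hstep : (m + 1) * q = m * q + q := by ring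
  have h := hw (b - (m + 1) * q) q (by omega)
  rw [show b - (b - (m + 1) * q) = (m + 1) * q + 0 by omega,
    show b - (m + 1) * q + q = b - m * q by omega, ih (by omega), mul_zero] at h
  have hcoeff : (((m + 1) * q + 0).choose q : R) = m + 1 := by
    simpa using Nat.cast_choose_mul_pow_add (R := R) hq hq (m + 1) 1
  have hmp : m + 1 < p := by
    by_contra! hpm
    have : p * q ≤ (m + 1) * q := Nat.mul_le_mul_right q hpm
    have hpq : b < p * q := by simpa only [pow_succ'] using hbL
    omega
  have hne : ((m + 1 : ℕ) : R) ≠ 0 := by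
    rw [Ne, CharP.cast_eq_zero_iff R p]
    exact Nat.not_dvd_of_pos_of_lt m.succ_pos hmp
  rw [hcoeff] at h
  push_cast at hne
  exact (mul_eq_zero.mp h).resolve_left hne

theorem designCoeffs_apply_eq_zero_of_apply_sub_pow_eq_zero {a b L t : ℕ} {w : ℕ → R}
    (hw : w ∈ designCoeffs R (a + b) b) (hJ : p ^ L ∣ a + 1) (hLb : p ^ L ≤ b)
    (hbL : b < p ^ (L + 1)) (h0 : w (b - p ^ L) = 0) (ht : t < b) : w t = 0 := by
  by_cases hdvd : p ^ L ∣ b - t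
  · obtain ⟨m, hm⟩ := hdvd
    have hm0 : m ≠ 0 := by rintro rfl; omega
    rw [show t = b - m * p ^ L by rw [mul_comm]; omega]
    exact designCoeffs_apply_sub_mul_eq_zero hw hbL h0 m (by omega) (by rw [mul_comm]; omega)
  · exact designCoeffs_apply_eq_zero_of_not_dvd hw hJ hLb ht hdvd

end James

theorem james_designs_similar_general (p : ℕ) (hp : p.Prime)
    (k : Type*) [Field k] [CharP k p]
    (a b : ℕ)
    (hJames : p ^ Nat.log p b ∣ a + 1)
    (u v : Finset (Fin (a + b)) → k) (μ μ' : ℕ → k)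
    (hu : ∀ t < b, ∀ Y : Finset (Fin (a + b)), Y.card = t →
        ∑ X ∈ univ.filter (fun X : Finset (Fin (a + b)) => X.card = b ∧ Y ⊆ X), u X = μ t)
    (hv : ∀ t < b, ∀ Y : Finset (Fin (a + b)), Y.card = t →
        ∑ X ∈ univ.filter (fun X : Finset (Fin (a + b)) => X.card = b ∧ Y ⊆ X), v X = μ' t)
    (hvnn : ∃ t < b, μ' t ≠ 0) :
    ∃ α : k, ∀ j < b, μ j = α * μ' j := by
  have := Fact.mk hp
  obtain ⟨t₀, ht₀, hμ't₀⟩ := hvnn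
  set t₁ := b - p ^ Nat.log p b
  have key {w : ℕ → k} (hw : w ∈ designCoeffs k (a + b) b) (h : w t₁ = 0) {t : ℕ}
      (ht : t < b) : w t = 0 :=
    designCoeffs_apply_eq_zero_of_apply_sub_pow_eq_zero hw hJames
      (Nat.pow_log_le_self p (by omega)) (Nat.lt_pow_succ_log_self hp.one_lt b) h ht
  have hμ : μ ∈ designCoeffs k (a + b) b := by simpa using mem_designCoeffs (by simp) hu
  have hμ' : μ' ∈ designCoeffs k (a + b) b := by simpa using mem_designCoeffs (by simp) hv
  have hμ't₁ : μ' t₁ ≠ 0 := fun h => hμ't₀ (key hμ' h ht₀)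
  refine ⟨μ t₁ / μ' t₁, fun j hj => ?_⟩
  have hj := key
    (sub_mem (Submodule.smul_mem _ (μ' t₁) hμ) (Submodule.smul_mem _ (μ t₁) hμ'))
    (by simp [mul_comm]) hj
  simp only [Pi.sub_apply, Pi.smul_apply, smul_eq_mul, sub_eq_zero] at hj
  field_simp
  linear_combination hj

/-- Let `k` be a field of characteristic `p` and `a ≥ b ≥ 1` with
`(a,b)` James (`p^{l_p(b)} ∣ a + 1`).  Any two non-null universal `p`-ary designs `u`,
`v` for `(a,b)`, with coefficient sequences `μ` and `μ'`, are similar: there is `α ∈ k`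
with `μ_j = α · μ'_j` for all `j < b`. -/
theorem james_designs_similar (p : ℕ) (hp : p.Prime)
    (k : Type*) [Field k] [CharP k p]
    (a b : ℕ) (hb : 1 ≤ b) (hab : b ≤ a)
    (hJames : p ^ Nat.log p b ∣ a + 1)
    (u v : Finset (Fin (a + b)) → k) (μ μ' : ℕ → k)
    (hu : ∀ t < b, ∀ Y : Finset (Fin (a + b)), Y.card = t →
        ∑ X ∈ univ.filter (fun X : Finset (Fin (a + b)) => X.card = b ∧ Y ⊆ X), u X = μ t)
    (hv : ∀ t < b, ∀ Y : Finset (Fin (a + b)), Y.card = t →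
        ∑ X ∈ univ.filter (fun X : Finset (Fin (a + b)) => X.card = b ∧ Y ⊆ X), v X = μ' t)
    (hunn : ∃ t < b, μ t ≠ 0) (hvnn : ∃ t < b, μ' t ≠ 0) :
    ∃ α : k, ∀ j < b, μ j = α * μ' j :=
  james_designs_similar_general p hp k a b hJames u v μ μ' hu hv hvnn
end

section
/- Let p ≥ 3 be a prime, β ≥ 0, b = p^β, and a ≥ b an integer. Fix a subset S of {1,…,a+b} with |S| = 2b − 1, and define c on the b-element subsets of {1,…,a+b} by c(X) = 1 if X ⊆ S and c(X) = 0 otherwise. Then c is a universal p-ary design for (a,b) whose coefficients satisfy μ_0 = C(2b−1, b) ≠ 0 in k and μ_j = 0 for all 1 ≤ j < b. Moreover, if p^{ν_p(a+1)} < b then c is not similar to the constant design. -/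
/-!
For `Y ⊆ S` with `|Y| = t` the design sums to `C(2b - 1 - t, b - t)`, the number of `b`-sets
between `Y` and `S`. By Kummer's theorem everything reduces to carries in base `p`: since
`b - 1 = p^β - 1` has all digits `p - 1`, adding `b - t` to it carries when `0 < t < b`, while
adding `b` does not, so `μ_0 ≠ 0 = μ_t` in `k`. For `q = p^{ν_p(a+1)}` the sum `a + q` has no carry
either, so `C(a + q, q) ≠ 0` in `k`; similarity at `j = b - q` would force `α = 0`, hence `μ_0 = 0`.
-/

open Finset

namespace Nat.Prime

variable {p : ℕ}

theorem dvd_choose_add_iff_exists_carry (hp : p.Prime) {n k : ℕ} :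
    p ∣ (n + k).choose k ↔ ∃ i, 0 < i ∧ p ^ i ≤ k % p ^ i + n % p ^ i := by
  have := Fact.mk hp
  rw [dvd_iff_padicValNat_ne_zero (choose_ne_zero (le_add_left k n)),
    padicValNat_choose' (lt_succ_self _), ← pos_iff_ne_zero, Finset.card_pos, filter_nonempty_iff]
  refine ⟨fun ⟨i, hi, hc⟩ => ⟨i, (mem_Ico.1 hi).1, hc⟩, fun ⟨i, hi, hc⟩ => ⟨i, ?_, hc⟩⟩
  have hpow : p ^ i ≤ n + k :=
    hc.trans ((add_le_add (mod_le k _) (mod_le n _)).trans_eq (add_comm k n))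
  exact mem_Ico.2 ⟨hi, lt_succ_of_le (le_log_of_pow_le hp.one_lt hpow)⟩

theorem dvd_choose_add_of_pow_dvd (hp : p.Prime) {n m i : ℕ} (hi : p ^ i ∣ n + 1)
    (hm : ¬ p ^ i ∣ m) :
    p ∣ (n + m).choose m := by
  have hpi : 0 < p ^ i := pow_pos hp.pos i
  have hn : n % p ^ i = p ^ i - 1 := (mod_eq_sub_iff one_pos hpi).2 hi
  have hm' : m % p ^ i ≠ 0 := fun h => hm (dvd_of_mod_eq_zero h)
  refine (hp.dvd_choose_add_iff_exists_carry).2 ⟨i, pos_of_ne_zero ?_, by omega⟩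
  rintro rfl
  exact hm (one_dvd m)

theorem not_dvd_choose_add_pow (hp : p.Prime) {n v : ℕ} (hv : p ^ v ∣ n + 1)
    (hv' : ¬ p ^ (v + 1) ∣ n + 1) :
    ¬ p ∣ (n + p ^ v).choose (p ^ v) := by
  rw [hp.dvd_choose_add_iff_exists_carry]
  rintro ⟨i, -, hcarry⟩
  have hpi : 0 < p ^ i := pow_pos hp.pos i
  have hmod : n % p ^ i + 1 ≡ n + 1 [MOD p ^ i] := (mod_modEq n _).add_right 1
  rcases le_or_gt i v with hiv | hvi
  · have hq : p ^ v % p ^ i = 0 := mod_eq_zero_of_dvd (pow_dvd_pow p hiv)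
    have := mod_lt n hpi
    omega
  · have hqi : p ^ v ∣ p ^ i := pow_dvd_pow p hvi.le
    have hq : p ^ v % p ^ i = p ^ v := mod_eq_of_lt (pow_lt_pow_right₀ hp.one_lt hvi)
    have hne : n % p ^ i + 1 ≠ p ^ i := fun h =>
      hv' ((pow_dvd_pow p hvi).trans ((hmod.dvd_iff dvd_rfl).1 (by rw [h])))
    -- `n % p ^ i + 1` is a multiple of `p ^ v` below `p ^ i`, so adding `p ^ v` cannot carry.
    have hlt : n % p ^ i + 1 < p ^ i := lt_of_le_of_ne (mod_lt n hpi) hne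
    have hle : n % p ^ i + 1 + p ^ v ≤ p ^ i :=
      le_of_lt_add_of_dvd (by omega) (dvd_add ((hmod.dvd_iff hqi).2 hv) dvd_rfl) hqi
    omega

theorem not_dvd_choose_two_mul_pow_sub_one (hp : p.Prime) (β : ℕ) :
    ¬ p ∣ (2 * p ^ β - 1).choose (p ^ β) := by
  have hpβ : 0 < p ^ β := pow_pos hp.pos β
  have := hp.not_dvd_choose_add_pow (n := p ^ β - 1) (v := β)
    (by rw [Nat.sub_add_cancel hpβ])
    (by rw [Nat.sub_add_cancel hpβ, pow_dvd_pow_iff_le_right hp.one_lt]; omega)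
  rwa [show p ^ β - 1 + p ^ β = 2 * p ^ β - 1 by omega] at this

theorem dvd_choose_two_mul_pow_sub_one_sub (hp : p.Prime) {β t : ℕ} (ht : 0 < t)
    (htβ : t < p ^ β) :
    p ∣ (2 * p ^ β - 1 - t).choose (p ^ β - t) := by
  have := hp.dvd_choose_add_of_pow_dvd (n := p ^ β - 1) (m := p ^ β - t) (i := β)
    (by rw [Nat.sub_add_cancel (by omega)]) (Nat.not_dvd_of_pos_of_lt (by omega) (by omega))
  rwa [show p ^ β - 1 + (p ^ β - t) = 2 * p ^ β - 1 - t by omega] at this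

end Nat.Prime

namespace Finset

variable {α : Type*} [DecidableEq α]

theorem card_filter_powersetCard_superset {s t : Finset α} {n : ℕ} (hst : s ⊆ t)
    (hs : #s ≤ n) :
    #{u ∈ t.powersetCard n | s ⊆ u} = (#t - #s).choose (n - #s) := by
  rw [← card_sdiff_of_subset hst, ← card_powersetCard]
  refine card_nbij' (· \ s) (· ∪ s) (fun u hu => ?_) (fun u hu => ?_) (fun u hu => ?_)
    (fun u hu => ?_)
  all_goals simp only [coe_filter, mem_powersetCard, mem_coe] at hu ⊢
  · exact ⟨sdiff_subset_sdiff hu.1.1 subset_rfl, by rw [card_sdiff_of_subset hu.2, hu.1.2]⟩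
  · have hdisj : Disjoint u s := disjoint_of_subset_left hu.1 sdiff_disjoint
    refine ⟨⟨union_subset (hu.1.trans sdiff_subset) hst, ?_⟩, subset_union_right⟩
    rw [card_union_of_disjoint hdisj]
    omega
  · exact sdiff_union_of_subset hu.2
  · exact union_sdiff_cancel_right (disjoint_of_subset_left hu.1 sdiff_disjoint)

theorem sum_ite_subset_filter_superset_eq_card [Fintype α] {R : Type*} [Semiring R]
    (s t : Finset α) (n : ℕ) :
    ∑ u ∈ univ.filter (fun u : Finset α => #u = n ∧ s ⊆ u), (if u ⊆ t then (1 : R) else 0)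
      = #{u ∈ t.powersetCard n | s ⊆ u} := by
  rw [sum_boole, filter_filter]
  congr 2
  ext u
  simp only [mem_filter, mem_univ, true_and, mem_powersetCard]
  tauto

end Finset

theorem pure_power_hemmer_design_general (p : ℕ) (hp : p.Prime)
    (k : Type*) [Field k] [CharP k p]
    (β a b : ℕ) (hbeq : b = p ^ β)
    (S : Finset (Fin (a + b))) (hS : S.card = 2 * b - 1) :
    (∀ t < b, ∀ Y : Finset (Fin (a + b)), Y.card = t →
        ∑ X ∈ univ.filter (fun X : Finset (Fin (a + b)) => X.card = b ∧ Y ⊆ X),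
            (if X ⊆ S then (1 : k) else 0)
          = if t = 0 then (Nat.choose (2 * b - 1) b : k) else 0) ∧
    (Nat.choose (2 * b - 1) b : k) ≠ 0 ∧
    (p ^ padicValNat p (a + 1) < b →
      ¬ ∃ α : k, ∀ j < b,
          (if j = 0 then (Nat.choose (2 * b - 1) b : k) else 0)
            = α * (Nat.choose (a + b - j) (b - j) : k)) := by
  subst hbeq
  have hμ₀ : ((2 * p ^ β - 1).choose (p ^ β) : k) ≠ 0 := by
    rw [Ne, CharP.cast_eq_zero_iff k p]
    exact hp.not_dvd_choose_two_mul_pow_sub_one β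
  refine ⟨fun t ht Y hY => ?_, hμ₀, fun hlt ⟨α, hα⟩ => ?_⟩
  · rw [sum_ite_subset_filter_superset_eq_card]
    rcases Nat.eq_zero_or_pos t with rfl | ht₀
    · simp [card_eq_zero.1 hY, hS]
    by_cases hYS : Y ⊆ S
    · rw [card_filter_powersetCard_superset hYS (by omega), hS, hY, if_neg ht₀.ne',
        CharP.cast_eq_zero_iff k p]
      exact hp.dvd_choose_two_mul_pow_sub_one_sub ht₀ ht
    · rw [filter_false_of_mem fun X hX hYX => hYS (hYX.trans (mem_powersetCard.1 hX).1),
        if_neg ht₀.ne', card_empty, Nat.cast_zero]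
  · set q := p ^ padicValNat p (a + 1)
    have hq : 0 < q := pow_pos hp.pos _
    have hC : ((a + q).choose q : k) ≠ 0 := by
      have := Fact.mk hp
      rw [Ne, CharP.cast_eq_zero_iff k p]
      exact hp.not_dvd_choose_add_pow pow_padicValNat_dvd
        (pow_succ_padicValNat_not_dvd (Nat.succ_ne_zero a))
    have hα₀ : α = 0 := by
      have h := hα (p ^ β - q) (by omega)
      rw [if_neg (by omega), show a + p ^ β - (p ^ β - q) = a + q by omega,
        show p ^ β - (p ^ β - q) = q by omega] at h
      exact (mul_eq_zero.1 h.symm).resolve_right hC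
    exact hμ₀ (by simpa [hα₀] using hα 0 (pow_pos hp.pos β))

/-- Let `p ≥ 3` be prime, `k` a field of characteristic `p`,
`b = p^β`, `a ≥ b`, and `S ⊆ {1,…,a+b}` with `|S| = 2b − 1`.  Define `c X = 1` if
`X ⊆ S` and `c X = 0` otherwise.  Then `c` is a universal `p`-ary design for
`(a,b)` with coefficients `μ_0 = C(2b−1, b) ≠ 0` in `k` and `μ_j = 0` for
`1 ≤ j < b`; moreover if `p^{ν_p(a+1)} < b` then `c` is not similar to the
constant design. -/
theorem pure_power_hemmer_design (p : ℕ) (hp : p.Prime) (hp3 : 3 ≤ p)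
    (k : Type*) [Field k] [CharP k p]
    (β a b : ℕ) (hbeq : b = p ^ β) (hab : b ≤ a)
    (S : Finset (Fin (a + b))) (hS : S.card = 2 * b - 1) :
    (∀ t < b, ∀ Y : Finset (Fin (a + b)), Y.card = t →
        ∑ X ∈ univ.filter (fun X : Finset (Fin (a + b)) => X.card = b ∧ Y ⊆ X),
            (if X ⊆ S then (1 : k) else 0)
          = if t = 0 then (Nat.choose (2 * b - 1) b : k) else 0) ∧
    (Nat.choose (2 * b - 1) b : k) ≠ 0 ∧
    (p ^ padicValNat p (a + 1) < b →
      ¬ ∃ α : k, ∀ j < b,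
          (if j = 0 then (Nat.choose (2 * b - 1) b : k) else 0)
            = α * (Nat.choose (a + b - j) (b - j) : k)) :=
  pure_power_hemmer_design_general p hp k β a b hbeq S hS
end
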